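/- arXiv:1801.03161 — 7 statements merged into one kernel-verified Lean document; each statement's English description precedes it below -/
import Mathlib

section
/- Let R be a commutative ring isomorphic to a finite direct product of fields. Then for any a, b ∈ R[x], a greatest common divisor of a and b exists, i.e., there is g ∈ R[x] with g | a, g | b, and every common divisor of a and b divides g. -/
/-!
Via `R[X] ≃+* (∀ i, F i)[X] ≃+* ∀ i, (F i)[X]`, divisibility in `R[X]` is componentwise
divisibility of polynomials over the fields `F i`. These rings are Euclidean, so a gcd is given
by the family of componentwise gcds.
-/

open Polynomial

def HasGCDs (M : Type*) [Semigroup M] : Prop :=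
  ∀ a b : M, ∃ g : M, g ∣ a ∧ g ∣ b ∧ ∀ d : M, d ∣ a → d ∣ b → d ∣ g

namespace HasGCDs

theorem of_euclideanDomain (α : Type*) [EuclideanDomain α] : HasGCDs α := by
  classical
  exact fun a b => ⟨EuclideanDomain.gcd a b, EuclideanDomain.gcd_dvd_left a b,
    EuclideanDomain.gcd_dvd_right a b, fun _ => EuclideanDomain.dvd_gcd⟩

theorem pi {ι : Type*} {M : ι → Type*} [∀ i, Semigroup (M i)] (h : ∀ i, HasGCDs (M i)) :
    HasGCDs (∀ i, M i) := by
  intro a b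
  choose g hga hgb hg using fun i => h i (a i) (b i)
  refine ⟨g, pi_dvd_iff.2 hga, pi_dvd_iff.2 hgb, fun d hda hdb => pi_dvd_iff.2 fun i => ?_⟩
  exact hg i (d i) (pi_dvd_iff.1 hda i) (pi_dvd_iff.1 hdb i)

theorem of_mulEquiv {M N : Type*} [Semigroup M] [Semigroup N] (f : M ≃* N) (h : HasGCDs N) :
    HasGCDs M := by
  intro a b
  obtain ⟨g, hga, hgb, hg⟩ := h (f a) (f b)
  refine ⟨f.symm g, ?_, ?_, fun d hda hdb => ?_⟩
  · rwa [← map_dvd_iff f, f.apply_symm_apply]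
  · rwa [← map_dvd_iff f, f.apply_symm_apply]
  · rw [← map_dvd_iff f, f.apply_symm_apply]
    exact hg (f d) (map_dvd f hda) (map_dvd f hdb)

end HasGCDs

/-- If `R` is a commutative ring isomorphic to a finite direct product of fields, then any two
polynomials `a, b ∈ R[x]` have a greatest common divisor. -/
theorem gcd_exists_of_prod_fields {R : Type} [CommRing R] {r : ℕ} (F : Fin r → Type)
    [∀ i, Field (F i)] (e : R ≃+* ∀ i, F i) (a b : Polynomial R) :
    ∃ g : Polynomial R, g ∣ a ∧ g ∣ b ∧ ∀ d : Polynomial R, d ∣ a → d ∣ b → d ∣ g := by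
  have hF : HasGCDs (∀ i, (F i)[X]) := .pi fun i => .of_euclideanDomain (F i)[X]
  exact hF.of_mulEquiv ((mapEquiv e).trans (piEquiv F)).toMulEquiv a b
end

section
/- Let R be a commutative ring isomorphic to a finite direct product of fields, a, b ∈ R[x], and g a greatest common divisor of a and b. Then there exist polynomials A, B ∈ R[x] such that aA + bB = g. -/
/-- Extended Euclidean representation: if `R` is a commutative ring isomorphic to a finite
direct product of fields and `g` is a greatest common divisor of `a, b ∈ R[x]`, then
`g = aA + bB` for some `A, B ∈ R[x]`. -/
theorem extended_euclidean_representation {R : Type} [CommRing R] {r : ℕ} (F : Fin r → Type)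
    [∀ i, Field (F i)] (e : R ≃+* ∀ i, F i) (a b g : Polynomial R)
    (hga : g ∣ a) (hgb : g ∣ b) (hgcd : ∀ d : Polynomial R, d ∣ a → d ∣ b → d ∣ g) :
    ∃ A B : Polynomial R, a * A + b * B = g := by
  classical
  let E : Polynomial R ≃+* ∀ i, Polynomial (F i) :=
    (Polynomial.mapEquiv e).trans (Polynomial.piEquiv F)
  set a' := E a with ha'
  set b' := E b with hb'
  set g' := E g with hg'
  -- componentwise gcd
  let d' : ∀ i, Polynomial (F i) := fun i => EuclideanDomain.gcd (a' i) (b' i)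
  -- d' divides a' and b' in the product ring
  have hda : d' ∣ a' := ⟨fun i => Classical.choose
      ((EuclideanDomain.gcd_dvd_left (a' i) (b' i)) : d' i ∣ a' i),
    funext fun i => Classical.choose_spec
      ((EuclideanDomain.gcd_dvd_left (a' i) (b' i)) : d' i ∣ a' i)⟩
  have hdb : d' ∣ b' := ⟨fun i => Classical.choose
      ((EuclideanDomain.gcd_dvd_right (a' i) (b' i)) : d' i ∣ b' i),
    funext fun i => Classical.choose_spec
      ((EuclideanDomain.gcd_dvd_right (a' i) (b' i)) : d' i ∣ b' i)⟩
  -- transfer to R[x] and use hgcd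
  have hda' : E.symm d' ∣ a := by
    have := map_dvd (E.symm : (∀ i, Polynomial (F i)) →+* Polynomial R) hda
    simpa [ha', E.symm_apply_apply] using this
  have hdb' : E.symm d' ∣ b := by
    have := map_dvd (E.symm : (∀ i, Polynomial (F i)) →+* Polynomial R) hdb
    simpa [hb', E.symm_apply_apply] using this
  have hdg : E.symm d' ∣ g := hgcd _ hda' hdb'
  have hdg' : d' ∣ g' := by
    have := map_dvd (E : Polynomial R →+* ∀ i, Polynomial (F i)) hdg
    simpa using this
  obtain ⟨c, hc⟩ := hdg'
  -- Bezout in each component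
  let A' : ∀ i, Polynomial (F i) := fun i =>
    EuclideanDomain.gcdA (a' i) (b' i) * c i
  let B' : ∀ i, Polynomial (F i) := fun i =>
    EuclideanDomain.gcdB (a' i) (b' i) * c i
  have key : a' * A' + b' * B' = g' := by
    funext i
    have hbez := EuclideanDomain.gcd_eq_gcd_ab (a' i) (b' i)
    have hgi : g' i = d' i * c i := congrFun hc i
    simp only [Pi.add_apply, Pi.mul_apply, A', B', hgi]
    rw [← mul_assoc, ← mul_assoc, ← add_mul, ← hbez]
  refine ⟨E.symm A', E.symm B', ?_⟩
  apply E.injective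
  have : E (E.symm A') = A' := E.apply_symm_apply A'
  have hB : E (E.symm B') = B' := E.apply_symm_apply B'
  simp [map_add, map_mul, this, hB, ← ha', ← hb', key, ← hg']
end

section
/- Let p be a prime, T ⊂ Z_p[z_1,...,z_n] a zero-dimensional triangular set, and R = Z_p[z_1,...,z_n]/⟨T_{n-1}⟩ viewed with coefficients liftable p-adically. Suppose t_n ≡ u_0 v_0 (mod ⟨T_{n-1}⟩, p) with u_0, v_0 monic in z_n, and there exist A, B with A u_0 + B v_0 ≡ 1 (mod ⟨T_{n-1}⟩, p). Then for every k ≥ 1 there exist monic polynomials u_k, v_k, unique modulo p^k, such that t_n ≡ u_k v_k (mod ⟨T_{n-1}⟩, p^k), u_k ≡ u_0 (mod p), and v_k ≡ v_0 (mod p). -/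
/-!
Send `z` to the polynomial variable, `ℤ[z₁, …, zₙ] ≃ (ℤ[z₁, …, zₙ₋₁])[z]`. The generators of
`⟨T_{n-1}⟩` do not involve `z`, so they are constants `a` there, and a congruence modulo
`⟨T_{n-1}, p^k⟩` becomes a coefficientwise congruence modulo `a + (p)^k`.

Over any commutative ring, for the ideals `a + I^k`, a factorisation `f ≡ u v` with
`A u + B v ≡ 1 (mod a + I)` lifts from `a + I^k` to `a + I^(k+1)` by the corrections
`δ = B e mod u`, `ε = A e mod v` of the error `e = f - u v`. Both existence and uniqueness rest
on one fact: modulo any ideal, a monic `u` divides no nonzero polynomial of degree `< deg u`.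
-/

open MvPolynomial

/-- `f` is monic of positive degree in the variable `i`. -/
def MonicInVar {k : Type*} [CommRing k] {n : ℕ} (f : MvPolynomial (Fin n) k) (i : Fin n) : Prop :=
  ∃ (d : ℕ) (r : MvPolynomial (Fin n) k), 0 < d ∧ degreeOf i r < d ∧ f = X i ^ d + r

/-- `t` is a (zero-dimensional) triangular set. -/
def IsTriangularSet {k : Type*} [CommRing k] {n : ℕ}
    (t : Fin n → MvPolynomial (Fin n) k) : Prop :=
  ∀ i, MonicInVar (t i) i ∧ (∀ j, i < j → degreeOf j (t i) = 0) ∧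
    ∀ j, j < i → degreeOf j (t i) < degreeOf j (t j)

theorem mul_add_mul_sub_one_mem_of_sub_mem {S : Type*} [CommRing S] {K : Ideal S}
    {A B u v u₀ v₀ : S} (h : A * u₀ + B * v₀ - 1 ∈ K) (hu : u - u₀ ∈ K) (hv : v - v₀ ∈ K) :
    A * u + B * v - 1 ∈ K := by
  convert K.add_mem (K.add_mem h (K.mul_mem_left A hu)) (K.mul_mem_left B hv) using 1
  ring

open Polynomial

namespace Polynomial

variable {R : Type*} [CommRing R]

section QuotientCoefficients

variable {b : Ideal R}

theorem map_mk_eq_zero_iff_mem_map_C {g : R[X]} :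
    g.map (Ideal.Quotient.mk b) = 0 ↔ g ∈ b.map C := by
  rw [← coe_mapRingHom, ← RingHom.mem_ker, ker_mapRingHom, Ideal.mk_ker]

theorem modByMonic_mem_map_C {g u : R[X]} (hu : u.Monic) (hg : g ∈ b.map C) :
    g %ₘ u ∈ b.map C := by
  rw [← map_mk_eq_zero_iff_mem_map_C, map_modByMonic _ hu,
    map_mk_eq_zero_iff_mem_map_C.2 hg, zero_modByMonic]

theorem mem_map_C_of_sub_monic_mul_mem {α u w : R[X]} (hu : u.Monic)
    (hα : α.degree < u.degree) (h : α - u * w ∈ b.map C) : α ∈ b.map C := by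
  rw [← map_mk_eq_zero_iff_mem_map_C] at h ⊢
  nontriviality R ⧸ b
  have hdvd : u.map (Ideal.Quotient.mk b) ∣ α.map (Ideal.Quotient.mk b) :=
    ⟨w.map _, by rwa [Polynomial.map_sub, Polynomial.map_mul, sub_eq_zero] at h⟩
  have hlt : (α.map (Ideal.Quotient.mk b)).degree < (u.map (Ideal.Quotient.mk b)).degree := by
    rw [hu.degree_map]
    exact degree_map_le.trans_lt hα
  rw [← (modByMonic_eq_self_iff (hu.map _)).2 hlt]
  exact (modByMonic_eq_zero_iff_dvd (hu.map _)).2 hdvd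

theorem natDegree_eq_of_sub_mem_map_C (hb : b ≠ ⊤) {f g : R[X]} (hf : f.Monic) (hg : g.Monic)
    (h : f - g ∈ b.map C) : f.natDegree = g.natDegree := by
  have : Nontrivial (R ⧸ b) := Ideal.Quotient.nontrivial_iff.2 hb
  rw [← map_mk_eq_zero_iff_mem_map_C, Polynomial.map_sub, sub_eq_zero] at h
  rw [← hf.natDegree_map (Ideal.Quotient.mk b), h, hg.natDegree_map]

end QuotientCoefficients

theorem Monic.degree_sub_lt {f g : R[X]} [Nontrivial R] (hf : f.Monic) (hg : g.Monic)
    (h : f.natDegree = g.natDegree) : (f - g).degree < f.degree :=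
  degree_sub_lt_left (by rw [degree_eq_natDegree hf.ne_zero, degree_eq_natDegree hg.ne_zero, h])
    hf.ne_zero (by rw [hf.leadingCoeff, hg.leadingCoeff])

section IdealFiltration

variable {a I : Ideal R}

theorem _root_.Ideal.sup_pow_mul_sup_le (j : ℕ) : (a ⊔ I ^ j) * (a ⊔ I) ≤ a ⊔ I ^ (j + 1) := by
  rw [Ideal.mul_sup, Ideal.sup_mul, Ideal.sup_mul, pow_succ]
  exact sup_le (sup_le (le_sup_of_le_left Ideal.mul_le_left) (le_sup_of_le_left Ideal.mul_le_right))
    (sup_le (le_sup_of_le_left Ideal.mul_le_left) le_sup_right)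

theorem mul_mem_map_C_sup_pow_succ {j : ℕ} {x y : R[X]} (hx : x ∈ (a ⊔ I ^ j).map C)
    (hy : y ∈ (a ⊔ I).map C) : x * y ∈ (a ⊔ I ^ (j + 1)).map C :=
  Ideal.map_mono (Ideal.sup_pow_mul_sup_le j)
    (Ideal.map_mul (C : R →+* R[X]) _ _ ▸ Ideal.mul_mem_mul hx hy)

theorem map_C_sup_pow_antitone : Antitone fun k : ℕ ↦ (a ⊔ I ^ k).map (C : R →+* R[X]) :=
  fun _ _ h ↦ Ideal.map_mono (sup_le_sup_left (Ideal.pow_le_pow_right h) a)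

theorem map_C_sup_pow_le {k : ℕ} (hk : 1 ≤ k) :
    (a ⊔ I ^ k).map (C : R →+* R[X]) ≤ (a ⊔ I).map C := by
  simpa using map_C_sup_pow_antitone (a := a) (I := I) hk

theorem map_C_sup_pow_eq_top (h : a ⊔ I = ⊤) (k : ℕ) : (a ⊔ I ^ k).map (C : R →+* R[X]) = ⊤ := by
  rw [← Ideal.isCoprime_iff_sup_eq] at h
  rw [Ideal.isCoprime_iff_sup_eq.1 h.pow_right, Ideal.map_top]

theorem degree_mul_lt_degree_mul {δ u v : R[X]} [Nontrivial R] (hv : v.Monic)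
    (h : δ.degree < u.degree) : (δ * v).degree < (u * v).degree := by
  rw [hv.degree_mul, hv.degree_mul]
  exact WithBot.add_lt_add_right (degree_ne_bot.2 hv.ne_zero) h

theorem exists_hensel_step [Nontrivial R] {k : ℕ} (hk : 1 ≤ k) {f u v A B : R[X]}
    (hu : u.Monic) (hv : v.Monic) (hdeg : (f - u * v).degree < (u * v).degree)
    (hAB : A * u + B * v - 1 ∈ (a ⊔ I).map C) (hf : f - u * v ∈ (a ⊔ I ^ k).map C) :
    ∃ δ ε : R[X], δ.degree < u.degree ∧ ε.degree < v.degree ∧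
      δ ∈ (a ⊔ I ^ k).map C ∧ ε ∈ (a ⊔ I ^ k).map C ∧
      f - (u + δ) * (v + ε) ∈ (a ⊔ I ^ (k + 1)).map C := by
  set e := f - u * v
  have hδ := modByMonic_mem_map_C hu (Ideal.mul_mem_left _ B hf)
  have hε := modByMonic_mem_map_C hv (Ideal.mul_mem_left _ A hf)
  refine ⟨_, _, degree_modByMonic_lt _ hu, degree_modByMonic_lt _ hv, hδ, hε, ?_⟩
  -- `δ v + ε u ≡ e (A u + B v) ≡ e` up to a multiple of `u v`, which the degree bound kills.
  have hlin : e - (B * e %ₘ u) * v - (A * e %ₘ v) * u ∈ (a ⊔ I ^ (k + 1)).map C := by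
    refine mem_map_C_of_sub_monic_mul_mem (hu.mul hv) (w := B * e /ₘ u + A * e /ₘ v) ?_ ?_
    · refine (degree_sub_le _ _).trans_lt (max_lt ((degree_sub_le _ _).trans_lt
        (max_lt hdeg (degree_mul_lt_degree_mul hv (degree_modByMonic_lt _ hu)))) ?_)
      rw [mul_comm u v]
      exact degree_mul_lt_degree_mul hu (degree_modByMonic_lt _ hv)
    · convert neg_mem (mul_mem_map_C_sup_pow_succ hf hAB) using 1
      linear_combination (-v) * modByMonic_add_div (B * e) u - u * modByMonic_add_div (A * e) v
  have hquad := mul_mem_map_C_sup_pow_succ hδ (map_C_sup_pow_le hk hε)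
  convert sub_mem hlin hquad using 1
  ring

theorem exists_hensel_lift {f u₀ v₀ A B : R[X]} (hf : f.Monic) (hu₀ : u₀.Monic) (hv₀ : v₀.Monic)
    (hfac : f - u₀ * v₀ ∈ (a ⊔ I).map C) (hAB : A * u₀ + B * v₀ - 1 ∈ (a ⊔ I).map C)
    {k : ℕ} (hk : 1 ≤ k) :
    ∃ u v : R[X], u.Monic ∧ v.Monic ∧ u.natDegree = u₀.natDegree ∧ v.natDegree = v₀.natDegree ∧
      f - u * v ∈ (a ⊔ I ^ k).map C ∧ u - u₀ ∈ (a ⊔ I).map C ∧ v - v₀ ∈ (a ⊔ I).map C := by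
  rcases eq_or_ne (a ⊔ I) ⊤ with htop | hne
  · refine ⟨u₀, v₀, hu₀, hv₀, rfl, rfl, ?_, ?_, ?_⟩ <;>
      simp [htop, map_C_sup_pow_eq_top htop, Ideal.map_top]
  have : Nontrivial (R ⧸ (a ⊔ I)) := Ideal.Quotient.nontrivial_iff.2 hne
  have : Nontrivial R := (Ideal.Quotient.mk (a ⊔ I)).domain_nontrivial
  have hdeg : f.natDegree = u₀.natDegree + v₀.natDegree := by
    rw [natDegree_eq_of_sub_mem_map_C hne hf (hu₀.mul hv₀) hfac, hu₀.natDegree_mul hv₀]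
  induction k, hk using Nat.le_induction with
  | base => exact ⟨u₀, v₀, hu₀, hv₀, rfl, rfl, by simpa using hfac, by simp, by simp⟩
  | succ k hk ih =>
    obtain ⟨u, v, hu, hv, hud, hvd, hfk, hu₁, hv₁⟩ := ih
    have hnat : f.natDegree = (u * v).natDegree := by rw [hu.natDegree_mul hv, hud, hvd, hdeg]
    have hlt := Monic.degree_sub_lt hf (hu.mul hv) hnat
    rw [degree_eq_natDegree hf.ne_zero, hnat, ← degree_eq_natDegree (hu.mul hv).ne_zero] at hlt
    obtain ⟨δ, ε, hδ, hε, hδk, hεk, hstep⟩ := exists_hensel_step hk hu hv hlt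
      (mul_add_mul_sub_one_mem_of_sub_mem hAB hu₁ hv₁) hfk
    refine ⟨u + δ, v + ε, hu.add_of_left hδ, hv.add_of_left hε,
      (natDegree_add_eq_left_of_degree_lt hδ).trans hud,
      (natDegree_add_eq_left_of_degree_lt hε).trans hvd, hstep, ?_, ?_⟩
    · rw [add_sub_right_comm]
      exact add_mem hu₁ (map_C_sup_pow_le hk hδk)
    · rw [add_sub_right_comm]
      exact add_mem hv₁ (map_C_sup_pow_le hk hεk)

theorem sub_mem_map_C_sup_pow_succ {j : ℕ} {u u' v v' A B : R[X]} (hu : u.Monic)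
    (hdeg : (u - u').degree < u.degree) (hAB : A * u + B * v - 1 ∈ (a ⊔ I).map C)
    (hlin : (u - u') * v + u * (v - v') ∈ (a ⊔ I ^ (j + 1)).map C)
    (hj : u - u' ∈ (a ⊔ I ^ j).map C) : u - u' ∈ (a ⊔ I ^ (j + 1)).map C := by
  refine mem_map_C_of_sub_monic_mul_mem hu hdeg (w := A * (u - u') - B * (v - v')) ?_
  convert sub_mem (Ideal.mul_mem_left _ B hlin) (mul_mem_map_C_sup_pow_succ hj hAB) using 1
  ring

theorem hensel_lift_unique {u v u' v' A B : R[X]} (hu : u.Monic) (hv : v.Monic)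
    (hu' : u'.Monic) (hv' : v'.Monic) (hAB : A * u + B * v - 1 ∈ (a ⊔ I).map C)
    (hu₁ : u - u' ∈ (a ⊔ I).map C) (hv₁ : v - v' ∈ (a ⊔ I).map C) {k : ℕ}
    (hprod : u * v - u' * v' ∈ (a ⊔ I ^ k).map C) :
    u - u' ∈ (a ⊔ I ^ k).map C ∧ v - v' ∈ (a ⊔ I ^ k).map C := by
  rcases eq_or_ne (a ⊔ I) ⊤ with htop | hne
  · simp [map_C_sup_pow_eq_top htop]
  have : Nontrivial (R ⧸ (a ⊔ I)) := Ideal.Quotient.nontrivial_iff.2 hne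
  have : Nontrivial R := (Ideal.Quotient.mk (a ⊔ I)).domain_nontrivial
  have hdu := Monic.degree_sub_lt hu hu' (natDegree_eq_of_sub_mem_map_C hne hu hu' hu₁)
  have hdv := Monic.degree_sub_lt hv hv' (natDegree_eq_of_sub_mem_map_C hne hv hv' hv₁)
  induction k with
  | zero => simp [Ideal.map_top]
  | succ j ih =>
    obtain ⟨huj, hvj⟩ := ih (map_C_sup_pow_antitone j.le_succ hprod)
    have hlin : (u - u') * v + u * (v - v') ∈ (a ⊔ I ^ (j + 1)).map C := by
      convert add_mem hprod (mul_mem_map_C_sup_pow_succ huj hv₁) using 1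
      ring
    have hAB' : B * v + A * u - 1 ∈ (a ⊔ I).map C := by rwa [add_comm (B * v)]
    have hlin' : (v - v') * u + v * (u - u') = (u - u') * v + u * (v - v') := by ring
    exact ⟨sub_mem_map_C_sup_pow_succ hu hdu hAB hlin huj,
      sub_mem_map_C_sup_pow_succ hv hdv hAB' (hlin' ▸ hlin) hvj⟩

theorem exists_unique_hensel_lift {f u₀ v₀ A B : R[X]} (hf : f.Monic) (hu₀ : u₀.Monic)
    (hv₀ : v₀.Monic) (hfac : f - u₀ * v₀ ∈ (a ⊔ I).map C)
    (hAB : A * u₀ + B * v₀ - 1 ∈ (a ⊔ I).map C) {k : ℕ} (hk : 1 ≤ k) :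
    ∃ u v : R[X], u.Monic ∧ v.Monic ∧ u.natDegree = u₀.natDegree ∧ v.natDegree = v₀.natDegree ∧
      f - u * v ∈ (a ⊔ I ^ k).map C ∧ u - u₀ ∈ (a ⊔ I).map C ∧ v - v₀ ∈ (a ⊔ I).map C ∧
      ∀ u' v' : R[X], u'.Monic → v'.Monic → f - u' * v' ∈ (a ⊔ I ^ k).map C →
        u' - u₀ ∈ (a ⊔ I).map C → v' - v₀ ∈ (a ⊔ I).map C →
        u - u' ∈ (a ⊔ I ^ k).map C ∧ v - v' ∈ (a ⊔ I ^ k).map C := by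
  obtain ⟨u, v, hu, hv, hud, hvd, hfk, hu₁, hv₁⟩ := exists_hensel_lift hf hu₀ hv₀ hfac hAB hk
  refine ⟨u, v, hu, hv, hud, hvd, hfk, hu₁, hv₁, fun u' v' hu' hv' hfk' hu₁' hv₁' ↦ ?_⟩
  refine hensel_lift_unique hu hv hu' hv' (mul_add_mul_sub_one_mem_of_sub_mem hAB hu₁ hv₁) ?_ ?_ ?_
  · simpa using sub_mem hu₁ hu₁'
  · simpa using sub_mem hv₁ hv₁'
  · simpa using sub_mem hfk' hfk

end IdealFiltration

end Polynomial

namespace MvPolynomial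

variable (R : Type*) [CommRing R] {m : ℕ}

noncomputable def finSuccEquivAt (z : Fin (m + 1)) :
    MvPolynomial (Fin (m + 1)) R ≃ₐ[R] (MvPolynomial (Fin m) R)[X] :=
  (renameEquiv R (Equiv.swap z 0)).trans (finSuccEquiv R m)

variable {R}

theorem natDegree_finSuccEquivAt (z : Fin (m + 1)) (f : MvPolynomial (Fin (m + 1)) R) :
    (finSuccEquivAt R z f).natDegree = degreeOf z f := by
  rw [finSuccEquivAt, AlgEquiv.trans_apply, renameEquiv_apply, natDegree_finSuccEquiv,
    ← degreeOf_rename_of_injective (Equiv.injective (Equiv.swap z 0)) z, Equiv.swap_apply_left]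

theorem finSuccEquivAt_X_self (z : Fin (m + 1)) : finSuccEquivAt R z (X z) = Polynomial.X := by
  rw [finSuccEquivAt, AlgEquiv.trans_apply, renameEquiv_apply, rename_X, Equiv.swap_apply_left,
    finSuccEquiv_X_zero]

theorem monicInVar_iff_finSuccEquivAt [Nontrivial R] {z : Fin (m + 1)}
    {f : MvPolynomial (Fin (m + 1)) R} :
    MonicInVar f z ↔ (finSuccEquivAt R z f).Monic ∧ 0 < (finSuccEquivAt R z f).natDegree := by
  constructor
  · rintro ⟨d, r, hd, hr, rfl⟩
    have hr' : (finSuccEquivAt R z r).degree < d :=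
      degree_le_natDegree.trans_lt (by rwa [natDegree_finSuccEquivAt, Nat.cast_lt])
    rw [map_add, map_pow, finSuccEquivAt_X_self,
      natDegree_add_eq_left_of_degree_lt (by rwa [degree_X_pow]),
      natDegree_X_pow]
    exact ⟨monic_X_pow_add hr', hd⟩
  · rintro ⟨hmonic, hd⟩
    set g := finSuccEquivAt R z f
    refine ⟨g.natDegree, (finSuccEquivAt R z).symm (g - Polynomial.X ^ g.natDegree), hd, ?_, ?_⟩
    · rw [← natDegree_finSuccEquivAt, AlgEquiv.apply_symm_apply]
      rcases eq_or_ne (g - Polynomial.X ^ g.natDegree) 0 with h0 | h0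
      · rwa [h0, natDegree_zero]
      · refine (natDegree_lt_iff_degree_lt h0).2 ?_
        have := hmonic.degree_sub_lt (monic_X_pow g.natDegree) (by simp)
        rwa [degree_eq_natDegree hmonic.ne_zero] at this
    · apply (finSuccEquivAt R z).injective
      rw [map_add, map_pow, finSuccEquivAt_X_self, AlgEquiv.apply_symm_apply]
      ring

theorem exists_map_finSuccEquivAt_span_eq_map_C {z : Fin (m + 1)}
    {G : Set (MvPolynomial (Fin (m + 1)) R)} (hG : ∀ g ∈ G, degreeOf z g = 0) :
    ∃ a : Ideal (MvPolynomial (Fin m) R),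
      (Ideal.span G).map (finSuccEquivAt R z) = a.map Polynomial.C := by
  refine ⟨Ideal.span (Polynomial.C ⁻¹' (finSuccEquivAt R z '' G)), ?_⟩
  rw [Ideal.map_span, Ideal.map_span, Set.image_preimage_eq_of_subset]
  rintro _ ⟨g, hg, rfl⟩
  exact ⟨_, (eq_C_of_natDegree_eq_zero
    ((natDegree_finSuccEquivAt z g).trans (hG g hg))).symm⟩

theorem finSuccEquivAt_mem_map_C_sup_iff {z : Fin (m + 1)}
    {J : Ideal (MvPolynomial (Fin (m + 1)) R)} {a : Ideal (MvPolynomial (Fin m) R)}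
    (ha : J.map (finSuccEquivAt R z) = a.map Polynomial.C) (p k : ℕ)
    (x : MvPolynomial (Fin (m + 1)) R) :
    finSuccEquivAt R z x ∈ (a ⊔ Ideal.span {(p : MvPolynomial (Fin m) R)} ^ k).map Polynomial.C ↔
      x ∈ J + Ideal.span {(p : MvPolynomial (Fin (m + 1)) R) ^ k} := by
  have hmap : (J + Ideal.span {(p : MvPolynomial (Fin (m + 1)) R) ^ k}).map (finSuccEquivAt R z) =
      (a ⊔ Ideal.span {(p : MvPolynomial (Fin m) R)} ^ k).map Polynomial.C := by
    rw [Submodule.add_eq_sup, Ideal.map_sup, ha, Ideal.map_sup, Ideal.span_singleton_pow,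
      Ideal.map_span, Ideal.map_span, Set.image_singleton, Set.image_singleton, map_pow,
      map_natCast, map_pow, map_natCast]
  rw [← hmap]
  exact Ideal.apply_mem_of_equiv_iff (f := (finSuccEquivAt R z).toRingEquiv)

end MvPolynomial

theorem hensel_lift_triangular_general {n : ℕ} (p : ℕ)
    (t : Fin n → MvPolynomial (Fin n) ℤ) (ht : IsTriangularSet t)
    (z : Fin n) (hz : (z : ℕ) = n - 1)
    (J : Ideal (MvPolynomial (Fin n) ℤ))
    (hJ : J = Ideal.span {f | ∃ i : Fin n, (i : ℕ) < n - 1 ∧ f = t i})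
    (u₀ v₀ : MvPolynomial (Fin n) ℤ)
    (hu₀ : MonicInVar u₀ z) (hv₀ : MonicInVar v₀ z)
    (hfac : t z - u₀ * v₀ ∈ J + Ideal.span {(p : MvPolynomial (Fin n) ℤ)})
    (hbez : ∃ A B : MvPolynomial (Fin n) ℤ,
      A * u₀ + B * v₀ - 1 ∈ J + Ideal.span {(p : MvPolynomial (Fin n) ℤ)}) :
    ∀ k : ℕ, 1 ≤ k → ∃ u v : MvPolynomial (Fin n) ℤ,
      MonicInVar u z ∧ MonicInVar v z ∧
      t z - u * v ∈ J + Ideal.span {(p : MvPolynomial (Fin n) ℤ) ^ k} ∧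
      u - u₀ ∈ J + Ideal.span {(p : MvPolynomial (Fin n) ℤ)} ∧
      v - v₀ ∈ J + Ideal.span {(p : MvPolynomial (Fin n) ℤ)} ∧
      ∀ u' v' : MvPolynomial (Fin n) ℤ, MonicInVar u' z → MonicInVar v' z →
        t z - u' * v' ∈ J + Ideal.span {(p : MvPolynomial (Fin n) ℤ) ^ k} →
        u' - u₀ ∈ J + Ideal.span {(p : MvPolynomial (Fin n) ℤ)} →
        v' - v₀ ∈ J + Ideal.span {(p : MvPolynomial (Fin n) ℤ)} →
        u - u' ∈ J + Ideal.span {(p : MvPolynomial (Fin n) ℤ) ^ k} ∧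
        v - v' ∈ J + Ideal.span {(p : MvPolynomial (Fin n) ℤ) ^ k} := by
  obtain ⟨m, rfl⟩ := Nat.exists_eq_add_one_of_ne_zero z.pos.ne'
  subst hJ
  obtain ⟨a, ha⟩ := exists_map_finSuccEquivAt_span_eq_map_C (z := z)
    (G := {f | ∃ i : Fin (m + 1), (i : ℕ) < m + 1 - 1 ∧ f = t i})
    (fun _ ⟨i, hi, hg⟩ ↦ hg ▸ (ht i).2.1 z (Fin.lt_def.2 (by omega)))
  have hmem := finSuccEquivAt_mem_map_C_sup_iff ha p
  have hmem₁ := hmem 1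
  simp only [pow_one] at hmem₁
  have hf := (monicInVar_iff_finSuccEquivAt.1 (ht z).1).1
  obtain ⟨A, B, hAB⟩ := hbez
  intro k hk
  simp only [monicInVar_iff_finSuccEquivAt, ← hmem, ← hmem₁, map_sub, map_mul, map_add, map_one]
    at hu₀ hv₀ hfac hAB ⊢
  obtain ⟨u, v, hu, hv, hud, hvd, hfk, hu₁, hv₁, huniq⟩ :=
    exists_unique_hensel_lift hf hu₀.1 hv₀.1 hfac hAB hk
  refine ⟨(finSuccEquivAt ℤ z).symm u, (finSuccEquivAt ℤ z).symm v, ?_⟩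
  simp only [AlgEquiv.apply_symm_apply]
  exact ⟨⟨hu, hud ▸ hu₀.2⟩, ⟨hv, hvd ▸ hv₀.2⟩, hfk, hu₁, hv₁,
    fun u' v' hu' hv' ↦ huniq _ _ hu'.1 hv'.1⟩

/-- Hensel lifting over a triangular set: if `t_n ≡ u₀v₀ (mod ⟨T_{n-1}⟩, p)` with `u₀, v₀`
monic in `z_n` and `u₀, v₀` comaximal modulo `(⟨T_{n-1}⟩, p)`, then for every `k ≥ 1` there
are monic `u_k, v_k`, unique modulo `(⟨T_{n-1}⟩, p^k)`, with `t_n ≡ u_k v_k (mod ⟨T_{n-1}⟩, p^k)`,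
`u_k ≡ u₀` and `v_k ≡ v₀ (mod ⟨T_{n-1}⟩, p)`. -/
theorem hensel_lift_triangular {n : ℕ} (hn : 1 ≤ n) (p : ℕ) (hp : p.Prime)
    (t : Fin n → MvPolynomial (Fin n) ℤ) (ht : IsTriangularSet t)
    (z : Fin n) (hz : (z : ℕ) = n - 1)
    (J : Ideal (MvPolynomial (Fin n) ℤ))
    (hJ : J = Ideal.span {f | ∃ i : Fin n, (i : ℕ) < n - 1 ∧ f = t i})
    (u₀ v₀ : MvPolynomial (Fin n) ℤ)
    (hu₀ : MonicInVar u₀ z) (hv₀ : MonicInVar v₀ z)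
    (hfac : t z - u₀ * v₀ ∈ J + Ideal.span {(p : MvPolynomial (Fin n) ℤ)})
    (hbez : ∃ A B : MvPolynomial (Fin n) ℤ,
      A * u₀ + B * v₀ - 1 ∈ J + Ideal.span {(p : MvPolynomial (Fin n) ℤ)}) :
    ∀ k : ℕ, 1 ≤ k → ∃ u v : MvPolynomial (Fin n) ℤ,
      MonicInVar u z ∧ MonicInVar v z ∧
      t z - u * v ∈ J + Ideal.span {(p : MvPolynomial (Fin n) ℤ) ^ k} ∧
      u - u₀ ∈ J + Ideal.span {(p : MvPolynomial (Fin n) ℤ)} ∧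
      v - v₀ ∈ J + Ideal.span {(p : MvPolynomial (Fin n) ℤ)} ∧
      ∀ u' v' : MvPolynomial (Fin n) ℤ, MonicInVar u' z → MonicInVar v' z →
        t z - u' * v' ∈ J + Ideal.span {(p : MvPolynomial (Fin n) ℤ) ^ k} →
        u' - u₀ ∈ J + Ideal.span {(p : MvPolynomial (Fin n) ℤ)} →
        v' - v₀ ∈ J + Ideal.span {(p : MvPolynomial (Fin n) ℤ)} →
        u - u' ∈ J + Ideal.span {(p : MvPolynomial (Fin n) ℤ) ^ k} ∧
        v - v' ∈ J + Ideal.span {(p : MvPolynomial (Fin n) ℤ) ^ k} :=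
  hensel_lift_triangular_general p t ht z hz J hJ u₀ v₀ hu₀ hv₀ hfac hbez
end

section
/- Let A be a commutative ring, p ∈ A, and f, u_0, v_0 ∈ A/pA[x] monic with f ≡ u_0 v_0 mod p and u_0, v_0 comaximal mod p (∃ s,t: s u_0 + t v_0 = 1). Then by induction, for each k ≥ 1 there exist monic lifts u_k, v_k ∈ A/p^k A[x] of u_0, v_0 with f ≡ u_k v_k mod p^k, and such lifts are unique modulo p^k. -/
/-!
Existence is Hensel–Newton iteration. If `f ≡ u v (mod p^k)` with `k ≥ 1`, write `f - u v = p^k c`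
with `deg c < deg u + deg v`; since `u` and `v` are coprime monic modulo `p`, one can solve
`u σ + v τ ≡ c (mod p)` with `deg σ < deg v` and `deg τ < deg u`. Then `u + p^k τ` and `v + p^k σ`
are again monic, and their product is `f` modulo `p^(k+1)` because `2k ≥ k + 1`.

Uniqueness: modulo `p^k` the element `p` is nilpotent, so coprimality modulo `p` becomes genuine
coprimality. From `u v = u' v'` with `u` coprime to `v'` and `u'` coprime to `v`, each of `u`, `u'`
divides the other, and monic polynomials dividing each other are equal.
-/

open Polynomial

theorem isCoprime_of_isNilpotent_of_dvd {R : Type*} [CommRing R] {x a b s t : R}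
    (hx : IsNilpotent x) (h : x ∣ s * a + t * b - 1) : IsCoprime a b := by
  obtain ⟨w, hw⟩ := h
  have hunit : IsUnit (s * a + t * b) := by
    rw [eq_add_of_sub_eq' hw]
    exact ((Commute.all x w).isNilpotent_mul_right hx).isUnit_one_add
  obtain ⟨y, hy⟩ := hunit.exists_left_inv
  exact ⟨y * s, y * t, by linear_combination hy⟩

namespace Polynomial

section CommRing

variable {R : Type*} [CommRing R]

theorem C_dvd_sub_iff_map_eq (a : R) (g h : R[X]) :
    C a ∣ g - h ↔ g.map (Ideal.Quotient.mk (Ideal.span {a})) =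
      h.map (Ideal.Quotient.mk (Ideal.span {a})) := by
  rw [← sub_eq_zero, ← Polynomial.map_sub, C_dvd_iff_dvd_coeff, Polynomial.ext_iff]
  simp only [coeff_map, coeff_zero, Ideal.Quotient.eq_zero_iff_dvd]

theorem Monic.eq_of_dvd_of_dvd {p q : R[X]} (hp : p.Monic) (hq : q.Monic) (hpq : p ∣ q)
    (hqp : q ∣ p) : p = q := by
  obtain ⟨a, ha⟩ := hpq
  obtain ⟨b, hb⟩ := hqp
  have hab : a * b = 1 := by
    rw [← sub_eq_zero, ← hp.mul_right_eq_zero_iff]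
    linear_combination (-b) * ha - hb
  exact eq_of_monic_of_associated hp hq ⟨Units.mkOfMulEqOne a b hab, ha.symm⟩

theorem Monic.eq_of_mul_eq_of_isCoprime {u v u' v' : R[X]} (hu : u.Monic) (hv : v.Monic)
    (hu' : u'.Monic) (hv' : v'.Monic) (h : u * v = u' * v') (huv' : IsCoprime u v')
    (hu'v : IsCoprime u' v) : u = u' ∧ v = v' :=
  ⟨hu.eq_of_dvd_of_dvd hu' (huv'.dvd_of_dvd_mul_right ⟨v, h.symm⟩)
      (hu'v.dvd_of_dvd_mul_right ⟨v', h⟩),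
    hv.eq_of_dvd_of_dvd hv' (hu'v.symm.dvd_of_dvd_mul_left ⟨u, by rw [← h, mul_comm]⟩)
      (huv'.symm.dvd_of_dvd_mul_left ⟨u', by rw [h, mul_comm]⟩)⟩

theorem exists_mul_add_mul_eq_of_degree_lt [Nontrivial R] {u v c : R[X]} (hu : u.Monic)
    (hv : v.Monic) (huv : IsCoprime u v) (hc : c.degree < u.degree + v.degree) :
    ∃ σ τ : R[X], σ.degree < v.degree ∧ τ.degree < u.degree ∧ u * σ + v * τ = c := by
  obtain ⟨s, t, hst⟩ := huv
  set τ := t * c %ₘ u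
  set σ := s * c + v * (t * c /ₘ u)
  have heq : u * σ + v * τ = c := by
    linear_combination c * hst + v * modByMonic_add_div (t * c) u
  refine ⟨σ, τ, ?_, degree_modByMonic_lt _ hu, heq⟩
  have hvτ : (v * τ).degree < u.degree + v.degree := by
    rw [add_comm]
    exact (degree_mul_le _ _).trans_lt
      (WithBot.add_lt_add_left (degree_ne_bot.2 hv.ne_zero) (degree_modByMonic_lt _ hu))
  have hσu : (σ * u).degree < v.degree + u.degree := by
    rw [mul_comm, add_comm, eq_sub_of_add_eq heq]
    exact (degree_sub_le _ _).trans_lt (max_lt hc hvτ)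
  rwa [hu.degree_mul, WithBot.add_lt_add_iff_right (degree_ne_bot.2 hu.ne_zero)] at hσu

theorem exists_eq_C_mul_of_C_dvd [Nontrivial R] {a : R} {g q : R[X]} (hq : q.Monic)
    (hg : C a ∣ g) (hdeg : g.degree < q.degree) :
    ∃ c : R[X], g = C a * c ∧ c.degree < q.degree := by
  obtain ⟨c, rfl⟩ := hg
  refine ⟨c %ₘ q, ?_, degree_modByMonic_lt _ hq⟩
  rw [← (modByMonic_eq_self_iff hq).2 hdeg, ← smul_eq_C_mul, ← smul_eq_C_mul, smul_modByMonic]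

theorem isCoprime_map_of_dvd_sub {S : Type*} [CommRing S] {φ : R →+* S} {p : R}
    (hp : IsNilpotent (φ p)) {s t u₀ v₀ u v : R[X]} (hst : C p ∣ s * u₀ + t * v₀ - 1)
    (hu : C p ∣ u - u₀) (hv : C p ∣ v - v₀) : IsCoprime (u.map φ) (v.map φ) := by
  have hcongr : s * u + t * v - 1 = (s * u₀ + t * v₀ - 1) + s * (u - u₀) + t * (v - v₀) := by
    ring
  have hdvd : C p ∣ s * u + t * v - 1 := by
    rw [hcongr]
    exact dvd_add (dvd_add hst (hu.mul_left s)) (hv.mul_left t)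
  refine isCoprime_of_isNilpotent_of_dvd (s := s.map φ) (t := t.map φ) (hp.map C) ?_
  simpa only [Polynomial.map_sub, Polynomial.map_add, Polynomial.map_mul, Polynomial.map_one,
    map_C] using Polynomial.map_dvd φ hdvd

theorem exists_map_mul_add_mul_eq {S : Type*} [CommRing S] [Nontrivial S] {φ : R →+* S}
    (hφ : Function.Surjective φ) {u v c : R[X]} (hu : u.Monic) (hv : v.Monic)
    (huv : IsCoprime (u.map φ) (v.map φ)) (hc : c.degree < u.degree + v.degree) :
    ∃ σ τ : R[X], σ.degree < v.degree ∧ τ.degree < u.degree ∧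
      (u * σ + v * τ).map φ = c.map φ := by
  obtain ⟨σ', τ', hσ', hτ', h⟩ :=
    exists_mul_add_mul_eq_of_degree_lt (c := c.map φ) (hu.map φ) (hv.map φ) huv
      (by rw [hu.degree_map φ, hv.degree_map φ]; exact degree_map_le.trans_lt hc)
  obtain ⟨σ, rfl, hσ⟩ := exists_degree_eq_of_mem_lifts (mem_lifts_of_surjective hφ σ')
  obtain ⟨τ, rfl, hτ⟩ := exists_degree_eq_of_mem_lifts (mem_lifts_of_surjective hφ τ')
  refine ⟨σ, τ, ?_, ?_, ?_⟩
  · rwa [hσ, ← hv.degree_map φ]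
  · rwa [hτ, ← hu.degree_map φ]
  · simpa only [Polynomial.map_add, Polynomial.map_mul] using h

theorem exists_hensel_lift_step {p : R} [Nontrivial (R ⧸ Ideal.span {p})] {k : ℕ} (hk : 1 ≤ k)
    {f u v : R[X]} (hf : f.Monic) (hu : u.Monic) (hv : v.Monic)
    (huv : IsCoprime (u.map (Ideal.Quotient.mk (Ideal.span {p})))
      (v.map (Ideal.Quotient.mk (Ideal.span {p}))))
    (h : C (p ^ k) ∣ f - u * v) :
    ∃ u' v' : R[X], u'.Monic ∧ v'.Monic ∧ C (p ^ (k + 1)) ∣ f - u' * v' ∧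
      C p ∣ u' - u ∧ C p ∣ v' - v := by
  set π := Ideal.Quotient.mk (Ideal.span {p})
  have : Nontrivial R := π.domain_nontrivial
  have hpk : C p ∣ C (p ^ k) := by
    rw [C_pow]
    exact dvd_pow_self _ (by omega)
  have hmod : f.map π = (u * v).map π := (C_dvd_sub_iff_map_eq p f (u * v)).1 (hpk.trans h)
  have hdeg : f.degree = (u * v).degree := by
    rw [← hf.degree_map π, hmod, (hu.mul hv).degree_map π]
  have hlt : (f - u * v).degree < (u * v).degree :=
    hdeg ▸ degree_sub_lt_left hdeg hf.ne_zero (by rw [hf.leadingCoeff, (hu.mul hv).leadingCoeff])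
  obtain ⟨c, hc, hcdeg⟩ := exists_eq_C_mul_of_C_dvd (hu.mul hv) h hlt
  obtain ⟨σ, τ, hσ, hτ, hστ⟩ := exists_map_mul_add_mul_eq Ideal.Quotient.mk_surjective hu hv huv
    (hcdeg.trans_eq hv.degree_mul)
  obtain ⟨e, he⟩ := (C_dvd_sub_iff_map_eq p c (u * σ + v * τ)).2 hστ.symm
  have hmonic : ∀ {w x : R[X]}, w.Monic → x.degree < w.degree → (w + C (p ^ k) * x).Monic :=
    fun hw hx ↦ hw.add_of_left (by rw [← smul_eq_C_mul]; exact (degree_smul_le _ _).trans_lt hx)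
  refine ⟨u + C (p ^ k) * τ, v + C (p ^ k) * σ, hmonic hu hτ, hmonic hv hσ, ?_,
    by simpa using hpk.mul_right τ, by simpa using hpk.mul_right σ⟩
  obtain ⟨j, rfl⟩ : ∃ j, k = j + 1 := ⟨k - 1, by omega⟩
  refine ⟨e - C p ^ j * τ * σ, ?_⟩
  simp only [C_pow] at hc ⊢
  linear_combination hc + C p ^ (j + 1) * he

theorem exists_monic_hensel_lift {p : R} {f u₀ v₀ s t : R[X]} (hf : f.Monic) (hu₀ : u₀.Monic)
    (hv₀ : v₀.Monic) (hfac : C p ∣ f - u₀ * v₀) (hst : C p ∣ s * u₀ + t * v₀ - 1) (k : ℕ)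
    (hk : 1 ≤ k) :
    ∃ u v : R[X], u.Monic ∧ v.Monic ∧ C (p ^ k) ∣ f - u * v ∧ C p ∣ u - u₀ ∧ C p ∣ v - v₀ := by
  rcases subsingleton_or_nontrivial (R ⧸ Ideal.span {p}) with hp | hp
  · have hunit : IsUnit (C (p ^ k)) :=
      ((Ideal.span_singleton_eq_top.1 (Ideal.Quotient.subsingleton_iff.1 hp)).pow k).map C
    exact ⟨u₀, v₀, hu₀, hv₀, hunit.dvd, by simp, by simp⟩
  induction k, hk using Nat.le_induction with
  | base => exact ⟨u₀, v₀, hu₀, hv₀, by rwa [pow_one], by simp, by simp⟩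
  | succ k hk ih =>
    obtain ⟨u, v, hu, hv, hfuv, hu₀u, hv₀v⟩ := ih
    obtain ⟨u', v', hu', hv', hfuv', huu', hvv'⟩ := exists_hensel_lift_step hk hf hu hv
      (isCoprime_map_of_dvd_sub (by simp) hst hu₀u hv₀v) hfuv
    refine ⟨u', v', hu', hv', hfuv', ?_, ?_⟩
    · simpa using dvd_add huu' hu₀u
    · simpa using dvd_add hvv' hv₀v

theorem C_pow_dvd_sub_of_monic_hensel_lifts {p : R} {k : ℕ} {f u₀ v₀ s t u v u' v' : R[X]}
    (hst : C p ∣ s * u₀ + t * v₀ - 1) (hu : u.Monic) (hv : v.Monic) (hu' : u'.Monic)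
    (hv' : v'.Monic) (hfuv : C (p ^ k) ∣ f - u * v) (hfuv' : C (p ^ k) ∣ f - u' * v')
    (hu₀u : C p ∣ u - u₀) (hv₀v : C p ∣ v - v₀) (hu₀u' : C p ∣ u' - u₀)
    (hv₀v' : C p ∣ v' - v₀) :
    C (p ^ k) ∣ u - u' ∧ C (p ^ k) ∣ v - v' := by
  set π := Ideal.Quotient.mk (Ideal.span {p ^ k})
  have hp : IsNilpotent (π p) := ⟨k, by rw [← map_pow]; exact Ideal.Quotient.mk_singleton_self _⟩
  have h : (u * v).map π = (u' * v').map π := by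
    rw [← C_dvd_sub_iff_map_eq, ← sub_sub_sub_cancel_left _ _ f]
    exact dvd_sub hfuv' hfuv
  rw [Polynomial.map_mul, Polynomial.map_mul] at h
  rw [C_dvd_sub_iff_map_eq, C_dvd_sub_iff_map_eq]
  exact (hu.map π).eq_of_mul_eq_of_isCoprime (hv.map π) (hu'.map π) (hv'.map π) h
    (isCoprime_map_of_dvd_sub hp hst hu₀u hv₀v') (isCoprime_map_of_dvd_sub hp hst hu₀u' hv₀v)

end CommRing

end Polynomial

/-- Abstract Hensel's lemma over a commutative ring `A` with respect to a principal ideal `(p)`: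
a factorization `f ≡ u₀v₀ (mod p)` of a monic `f` into monic comaximal factors lifts, for each
`k ≥ 1`, to a factorization `f ≡ u_k v_k (mod p^k)` into monic factors, uniquely modulo `p^k`. -/
theorem hensel_lemma_principal {A : Type*} [CommRing A] (p : A) (f u₀ v₀ : Polynomial A)
    (hf : f.Monic) (hu₀ : u₀.Monic) (hv₀ : v₀.Monic)
    (hfac : f - u₀ * v₀ ∈ Ideal.span {Polynomial.C p})
    (hcop : ∃ s t : Polynomial A, s * u₀ + t * v₀ - 1 ∈ Ideal.span {Polynomial.C p}) :
    ∀ k : ℕ, 1 ≤ k → ∃ u v : Polynomial A, u.Monic ∧ v.Monic ∧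
      f - u * v ∈ Ideal.span {Polynomial.C (p ^ k)} ∧
      u - u₀ ∈ Ideal.span {Polynomial.C p} ∧ v - v₀ ∈ Ideal.span {Polynomial.C p} ∧
      ∀ u' v' : Polynomial A, u'.Monic → v'.Monic →
        f - u' * v' ∈ Ideal.span {Polynomial.C (p ^ k)} →
        u' - u₀ ∈ Ideal.span {Polynomial.C p} → v' - v₀ ∈ Ideal.span {Polynomial.C p} →
        u - u' ∈ Ideal.span {Polynomial.C (p ^ k)} ∧
        v - v' ∈ Ideal.span {Polynomial.C (p ^ k)} := by
  intro k hk
  simp only [Ideal.mem_span_singleton] at hfac hcop ⊢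
  obtain ⟨s, t, hst⟩ := hcop
  obtain ⟨u, v, hu, hv, hfuv, hu₀u, hv₀v⟩ := exists_monic_hensel_lift hf hu₀ hv₀ hfac hst k hk
  exact ⟨u, v, hu, hv, hfuv, hu₀u, hv₀v, fun u' v' hu' hv' hfuv' hu₀u' hv₀v' =>
    C_pow_dvd_sub_of_monic_hensel_lifts hst hu hv hu' hv' hfuv hfuv' hu₀u hv₀v hu₀u' hv₀v'⟩
end

section
/- Let T ⊂ k[z_1,...,z_n] be a zero-dimensional triangular set, k a perfect field (or characteristic 0). Then ⟨T⟩ is radical if and only if for every i, gcd(t_i, ∂t_i/∂z_i) = 1 modulo ⟨T_{i-1}⟩, i.e., t_i and its derivative with respect to z_i generate the unit ideal modulo ⟨t_1,...,t_{i-1}⟩. -/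
/-!
Put `Aᵢ = k[z₁, …, zᵢ] ⧸ ⟨t₁, …, tᵢ⟩`. Since `tᵢ` is monic in `zᵢ`, `Aᵢ ≅ Aᵢ₋₁[X] ⧸ (tᵢ)` is a
finite `k`-algebra, and the theorem follows by induction on `n` from the one-step statement: for a
finite algebra `B` over a perfect field and a monic `f ∈ B[X]` of positive degree, `B[X] ⧸ (f)` is
reduced iff `B` is reduced and `(f, f') = 1`. Both conditions can be tested at the residue fields
`B ⧸ m` of the zero-dimensional ring `B`, where `f̄` is separable iff it is squarefree iff
`(B ⧸ m)[X] ⧸ (f̄)` is reduced. Going down, `(B ⧸ m)[X] ⧸ (f̄)` is a quotient of the reduced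
Artinian ring `B[X] ⧸ (f)`, hence a product of fields; going up, an element of `B[X] ⧸ (f)` that
vanishes modulo every `m` is zero, because a reduced zero-dimensional ring has zero Jacobson
radical.
-/

open MvPolynomial

open scoped Polynomial

section RingHom

variable {R S : Type*} [CommRing R] [CommRing S]

theorem isCoprime_apply_iff_of_surjective {F : Type*} [FunLike F R S] [RingHomClass F R S]
    {χ : F} (hχ : Function.Surjective χ) (x y : R) :
    IsCoprime (χ x) (χ y) ↔ ∃ a b, a * x + b * y - 1 ∈ RingHom.ker χ := by
  constructor
  · rintro ⟨a, b, h⟩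
    obtain ⟨a, rfl⟩ := hχ a
    obtain ⟨b, rfl⟩ := hχ b
    exact ⟨a, b, by simp [RingHom.mem_ker, h]⟩
  · rintro ⟨a, b, h⟩
    exact ⟨χ a, χ b, by simpa [RingHom.mem_ker, sub_eq_zero] using h⟩

theorem exists_mul_add_mul_sub_one_mem_map_iff {F G : Type*} [FunLike F R S]
    [RingHomClass F R S] [FunLike G S R] [RingHomClass G S R] {f : F} {g : G}
    (hgf : ∀ r, g (f r) = r) (I : Ideal R) (x y : R) :
    (∃ a b, a * f x + b * f y - 1 ∈ I.map f) ↔ ∃ a b, a * x + b * y - 1 ∈ I := by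
  constructor
  · rintro ⟨a, b, h⟩
    have hI : (I.map f).map g ≤ I := Ideal.map_le_iff_le_comap.mpr <|
      Ideal.map_le_iff_le_comap.mpr fun r hr => by simpa [Ideal.mem_comap, hgf] using hr
    exact ⟨g a, g b, by simpa [hgf] using hI (Ideal.mem_map_of_mem g h)⟩
  · rintro ⟨a, b, h⟩
    exact ⟨f a, f b, by simpa using Ideal.mem_map_of_mem f h⟩

theorem RingEquiv.isReduced_iff (e : R ≃+* S) : IsReduced R ↔ IsReduced S :=
  ⟨fun _ => isReduced_of_injective _ e.symm.injective,
    fun _ => isReduced_of_injective _ e.injective⟩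

theorem IsArtinianRing.isReduced_of_surjective [IsArtinianRing R] [IsReduced R] {g : R →+* S}
    (hg : Function.Surjective g) : IsReduced S := by
  have := IsArtinianRing.isSemisimpleRing_of_isReduced R
  have := g.isSemisimpleRing_of_surjective hg
  infer_instance

variable {k : Type*} [CommRing k] [Algebra k R] [Algebra k S]

theorem AlgHom.ker_quotientMkₐ_comp {χ : R →ₐ[k] S} (hχ : Function.Surjective χ) (x : R) :
    RingHom.ker ((Ideal.Quotient.mkₐ k (Ideal.span {χ x})).comp χ) =
      Ideal.span {x} ⊔ RingHom.ker χ := by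
  ext y
  rw [RingHom.mem_ker, AlgHom.comp_apply, Ideal.Quotient.mkₐ_eq_mk,
    Ideal.Quotient.eq_zero_iff_mem, ← Ideal.mem_comap, ← Set.image_singleton,
    ← Ideal.map_span, Ideal.comap_map_of_surjective' _ hχ]

noncomputable def AlgHom.quotientSpanSupKerEquivAdjoinRoot {A : Type*} [CommRing A] [Algebra k A]
    {χ : R →ₐ[k] A[X]} (hχ : Function.Surjective χ) (x : R) :
    (R ⧸ (Ideal.span {x} ⊔ RingHom.ker χ)) ≃ₐ[k] AdjoinRoot (χ x) :=
  (Ideal.quotientEquivAlgOfEq k (AlgHom.ker_quotientMkₐ_comp hχ x).symm).trans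
    (Ideal.quotientKerAlgEquivOfSurjective (Ideal.Quotient.mk_surjective.comp hχ))

end RingHom

section ZeroDimensional

variable {B : Type*} [CommRing B] [Ring.KrullDimLE 0 B]

theorem eq_zero_of_forall_mem_isMaximal [IsReduced B] {x : B}
    (h : ∀ m : Ideal B, m.IsMaximal → x ∈ m) : x = 0 := by
  have hx : x ∈ (⊥ : Ideal B).jacobson := Ideal.mem_sInf.mpr fun m hm => h m hm.2
  rwa [Ideal.jacobson_eq_radical, Ideal.radical_bot_of_isReduced] at hx

namespace Polynomial

theorem isCoprime_of_forall_isMaximal {f g : B[X]}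
    (h : ∀ m : Ideal B, m.IsMaximal →
      IsCoprime (f.map (Ideal.Quotient.mk m)) (g.map (Ideal.Quotient.mk m))) :
    IsCoprime f g := by
  by_contra hfg
  have hne : Ideal.span {f, g} ≠ ⊤ := fun htop => hfg <|
    Ideal.mem_span_pair.mp (htop ▸ Submodule.mem_top : (1 : B[X]) ∈ Ideal.span {f, g})
  obtain ⟨M, hM, hfgM⟩ := Ideal.exists_le_maximal _ hne
  -- `M.comap C` is prime, hence maximal because `B` is zero-dimensional.
  obtain ⟨u, v, huv⟩ := h (M.comap C) inferInstance
  obtain ⟨U, rfl⟩ := map_surjective _ Ideal.Quotient.mk_surjective u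
  obtain ⟨V, rfl⟩ := map_surjective _ Ideal.Quotient.mk_surjective v
  have hUV : U * f + V * g - 1 ∈ M := by
    refine Ideal.map_comap_le (f := C) ?_
    rw [← Ideal.mk_ker (I := M.comap C), ← ker_mapRingHom, RingHom.mem_ker]
    simp [← huv]
  have hfM : f ∈ M := hfgM (Ideal.subset_span (Set.mem_insert f _))
  have hgM : g ∈ M := hfgM (Ideal.subset_span (Set.mem_insert_of_mem f rfl))
  refine hM.ne_top (M.eq_top_of_isUnit_mem ?_ isUnit_one)
  simpa using M.sub_mem (M.add_mem (M.mul_mem_left U hfM) (M.mul_mem_left V hgM)) hUV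

theorem Monic.isRadical_of_forall_isMaximal [IsReduced B] {f : B[X]} (hf : f.Monic)
    (h : ∀ m : Ideal B, m.IsMaximal → IsRadical (f.map (Ideal.Quotient.mk m))) :
    IsRadical f := by
  intro N y hy
  rw [← modByMonic_eq_zero_iff_dvd hf]
  ext i
  refine eq_zero_of_forall_mem_isMaximal fun m hm => ?_
  have hdvd : f.map (Ideal.Quotient.mk m) ∣ y.map (Ideal.Quotient.mk m) :=
    h m hm N _ (by simpa only [Polynomial.map_pow] using Polynomial.map_dvd _ hy)
  rw [← Ideal.Quotient.eq_zero_iff_mem, ← coeff_map, map_modByMonic _ hf,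
    (modByMonic_eq_zero_iff_dvd (hf.map _)).mpr hdvd, coeff_zero]

end Polynomial

end ZeroDimensional

section AdjoinRoot

variable {B : Type*} [CommRing B] {f : B[X]}

theorem AdjoinRoot.of.injective_of_monic (hf : f.Monic) (hd : 0 < f.natDegree) :
    Function.Injective (AdjoinRoot.of f) :=
  (injective_iff_map_eq_zero _).mpr fun a ha => by_contra fun ha0 =>
    mk_ne_zero_of_natDegree_lt hf (Polynomial.C_ne_zero.mpr ha0)
      (by rwa [Polynomial.natDegree_C]) ha

namespace Polynomial

theorem Monic.squarefree_map_of_isReduced_adjoinRoot [IsArtinianRing B] (hf : f.Monic)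
    [IsReduced (AdjoinRoot f)] (m : Ideal B) [m.IsMaximal] :
    Squarefree (f.map (Ideal.Quotient.mk m)) := by
  let := Ideal.Quotient.field m
  have := hf.finite_adjoinRoot
  have := IsArtinianRing.of_finite B (AdjoinRoot f)
  have hle : Ideal.span {f} ≤ (Ideal.span {f.map (Ideal.Quotient.mk m)}).comap
      (mapRingHom (Ideal.Quotient.mk m)) := by
    rw [Ideal.span_le, Set.singleton_subset_iff]
    exact Ideal.subset_span rfl
  let g : AdjoinRoot f →+* AdjoinRoot (f.map (Ideal.Quotient.mk m)) :=
    Ideal.quotientMap _ _ hle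
  have : IsReduced (AdjoinRoot (f.map (Ideal.Quotient.mk m))) :=
    IsArtinianRing.isReduced_of_surjective (g := g)
      (Ideal.quotientMap_surjective (map_surjective _ Ideal.Quotient.mk_surjective))
  exact (isRadical_iff_span_singleton.mpr ((Ideal.isRadical_iff_quotient_reduced _).mpr this)
    ).squarefree (hf.map _).ne_zero

theorem separable_map_mk_iff_squarefree (k : Type*) [Field k] [PerfectField k] [Algebra k B]
    [Module.Finite k B] (m : Ideal B) [m.IsMaximal] (f : B[X]) :
    (f.map (Ideal.Quotient.mk m)).Separable ↔ Squarefree (f.map (Ideal.Quotient.mk m)) := by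
  let := Ideal.Quotient.field m
  have : Algebra.IsAlgebraic k (B ⧸ m) := Algebra.IsAlgebraic.of_finite k _
  have : PerfectField (B ⧸ m) := Algebra.IsAlgebraic.perfectField (K := k)
  exact PerfectField.separable_iff_squarefree

theorem Monic.isReduced_adjoinRoot_iff (k : Type*) [Field k] [PerfectField k] [Algebra k B]
    [Module.Finite k B] (hf : f.Monic) (hd : 0 < f.natDegree) :
    IsReduced (AdjoinRoot f) ↔ IsReduced B ∧ IsCoprime f (derivative f) := by
  have := IsArtinianRing.of_finite k B
  constructor
  · intro hred
    refine ⟨isReduced_of_injective _ (AdjoinRoot.of.injective_of_monic hf hd),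
      isCoprime_of_forall_isMaximal fun m hm => ?_⟩
    rw [← derivative_map]
    exact (separable_map_mk_iff_squarefree k m f).mpr
      (hf.squarefree_map_of_isReduced_adjoinRoot m)
  · rintro ⟨hB, hcop⟩
    refine (Ideal.isRadical_iff_quotient_reduced _).mp (isRadical_iff_span_singleton.mp
      (hf.isRadical_of_forall_isMaximal fun m hm => ?_))
    refine ((separable_map_mk_iff_squarefree k m f).mp ?_).isRadical
    rw [Separable, derivative_map]
    simpa only [coe_mapRingHom] using hcop.map (mapRingHom (Ideal.Quotient.mk m))

end Polynomial

end AdjoinRoot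

namespace MvPolynomial

theorem derivative_optionEquivLeft {R σ : Type*} [CommRing R] (p : MvPolynomial (Option σ) R) :
    Polynomial.derivative (optionEquivLeft R σ p) = optionEquivLeft R σ (pderiv none p) := by
  induction p using MvPolynomial.induction_on with
  | C a => simp [optionEquivLeft_C]
  | add p q hp hq => simp only [map_add, hp, hq]
  | mul_X p i hp =>
    cases i with
    | none =>
      simp only [map_mul, map_add, optionEquivLeft_X_none, Polynomial.derivative_mul, hp,
        Polynomial.derivative_X, pderiv_mul, pderiv_X_self, mul_one, add_comm]
    | some j =>
      simp only [map_mul, optionEquivLeft_X_some, Polynomial.derivative_mul, hp,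
        Polynomial.derivative_C, pderiv_mul, pderiv_X_of_ne (Option.some_ne_none j), mul_zero,
        add_zero]

variable (R : Type*) [CommRing R] (n : ℕ)

noncomputable def finSuccEquivLast :
    MvPolynomial (Fin (n + 1)) R ≃ₐ[R] (MvPolynomial (Fin n) R)[X] :=
  (renameEquiv R _root_.finSuccEquivLast).trans (optionEquivLeft R (Fin n))

variable {R n}

theorem finSuccEquivLast_rename_castSucc (p : MvPolynomial (Fin n) R) :
    finSuccEquivLast R n (rename Fin.castSucc p) = Polynomial.C p := by
  induction p using MvPolynomial.induction_on with
  | C a => simp [finSuccEquivLast, optionEquivLeft_C]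
  | add p q hp hq => simp only [map_add, hp, hq]
  | mul_X p i hp =>
    rw [map_mul, map_mul, hp, Polynomial.C_mul]
    simp [finSuccEquivLast, optionEquivLeft_X_some]

theorem finSuccEquivLast_X_last : finSuccEquivLast R n (X (Fin.last n)) = Polynomial.X := by
  simp [finSuccEquivLast, optionEquivLeft_X_none]

theorem natDegree_finSuccEquivLast (p : MvPolynomial (Fin (n + 1)) R) :
    (finSuccEquivLast R n p).natDegree = degreeOf (Fin.last n) p := by
  rw [finSuccEquivLast, AlgEquiv.trans_apply, natDegree_optionEquivLeft, renameEquiv_apply,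
    ← finSuccEquivLast_last, degreeOf_rename_of_injective (Equiv.injective _)]

theorem derivative_finSuccEquivLast (p : MvPolynomial (Fin (n + 1)) R) :
    Polynomial.derivative (finSuccEquivLast R n p) =
      finSuccEquivLast R n (pderiv (Fin.last n) p) := by
  rw [finSuccEquivLast, AlgEquiv.trans_apply, AlgEquiv.trans_apply, derivative_optionEquivLeft,
    renameEquiv_apply, renameEquiv_apply, ← finSuccEquivLast_last,
    pderiv_rename (Equiv.injective _)]

theorem exists_rename_castSucc_of_degreeOf_last_eq_zero {p : MvPolynomial (Fin (n + 1)) R}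
    (h : degreeOf (Fin.last n) p = 0) : ∃ q, p = rename Fin.castSucc q := by
  obtain ⟨q, hq⟩ := Polynomial.natDegree_eq_zero.mp ((natDegree_finSuccEquivLast p).trans h)
  exact ⟨q, (finSuccEquivLast R n).injective (by rw [finSuccEquivLast_rename_castSucc, hq])⟩

end MvPolynomial

section Triangular

variable {k : Type*} [CommRing k] {n : ℕ}

theorem MonicInVar.of_rename {m : ℕ} {f : Fin n → Fin m} (hf : Function.Injective f)
    {p : MvPolynomial (Fin n) k} {i : Fin n} (h : MonicInVar (rename f p) (f i)) :
    MonicInVar p i := by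
  obtain ⟨d, r, hd, hr, hpr⟩ := h
  have hr' : rename f (p - X i ^ d) = r := by
    rw [map_sub, hpr, map_pow, rename_X, add_sub_cancel_left]
  refine ⟨d, p - X i ^ d, hd, ?_, by ring⟩
  rwa [← degreeOf_rename_of_injective hf, hr']

variable {p : MvPolynomial (Fin (n + 1)) k}

theorem MonicInVar.exists_finSuccEquivLast_eq (h : MonicInVar p (Fin.last n)) :
    ∃ d : ℕ, 0 < d ∧ ∃ q : (MvPolynomial (Fin n) k)[X],
      q.degree < d ∧ finSuccEquivLast k n p = Polynomial.X ^ d + q := by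
  obtain ⟨d, r, hd, hr, rfl⟩ := h
  refine ⟨d, hd, finSuccEquivLast k n r, ?_, by rw [map_add, map_pow, finSuccEquivLast_X_last]⟩
  exact (Polynomial.degree_lt_iff_coeff_zero _ _).mpr fun m hm =>
    Polynomial.coeff_eq_zero_of_natDegree_lt (by rw [natDegree_finSuccEquivLast]; omega)

theorem MonicInVar.monic_finSuccEquivLast (h : MonicInVar p (Fin.last n)) :
    (finSuccEquivLast k n p).Monic := by
  obtain ⟨d, -, q, hq, hpq⟩ := h.exists_finSuccEquivLast_eq
  exact hpq ▸ Polynomial.monic_X_pow_add hq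

theorem MonicInVar.natDegree_finSuccEquivLast_pos [Nontrivial k] (h : MonicInVar p (Fin.last n)) :
    0 < (finSuccEquivLast k n p).natDegree := by
  obtain ⟨d, hd, q, hq, hpq⟩ := h.exists_finSuccEquivLast_eq
  rwa [hpq, Polynomial.natDegree_add_eq_left_of_degree_lt (by rwa [Polynomial.degree_X_pow]),
    Polynomial.natDegree_X_pow]

theorem IsTriangularSet.exists_rename_castSucc {t : Fin (n + 1) → MvPolynomial (Fin (n + 1)) k}
    (ht : IsTriangularSet t) :
    ∃ s : Fin n → MvPolynomial (Fin n) k, IsTriangularSet s ∧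
      ∀ i, t i.castSucc = rename Fin.castSucc (s i) := by
  choose s hs using fun i : Fin n => exists_rename_castSucc_of_degreeOf_last_eq_zero
    ((ht i.castSucc).2.1 _ (Fin.castSucc_lt_last i))
  have hdeg (i j : Fin n) : degreeOf j (s i) = degreeOf j.castSucc (t i.castSucc) := by
    rw [hs, degreeOf_rename_of_injective (Fin.castSucc_injective n)]
  refine ⟨s, fun i => ⟨?_, fun j hij => ?_, fun j hji => ?_⟩, hs⟩
  · exact MonicInVar.of_rename (Fin.castSucc_injective n) (hs i ▸ (ht i.castSucc).1)
  · rw [hdeg]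
    exact (ht _).2.1 _ (Fin.castSucc_lt_castSucc_iff.mpr hij)
  · rw [hdeg, hdeg]
    exact (ht _).2.2 _ (Fin.castSucc_lt_castSucc_iff.mpr hji)

end Triangular

section LastVariable

variable {k : Type*} [CommRing k] {n : ℕ}

noncomputable def toQuotientPolynomial (s : Fin n → MvPolynomial (Fin n) k) :
    MvPolynomial (Fin (n + 1)) k →ₐ[k] (MvPolynomial (Fin n) k ⧸ Ideal.span (Set.range s))[X] :=
  (Polynomial.mapAlgHom (Ideal.Quotient.mkₐ k _)).comp (finSuccEquivLast k n).toAlgHom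

variable (s : Fin n → MvPolynomial (Fin n) k)

theorem toQuotientPolynomial_apply (p : MvPolynomial (Fin (n + 1)) k) :
    toQuotientPolynomial s p = (finSuccEquivLast k n p).map (Ideal.Quotient.mk _) :=
  rfl

theorem toQuotientPolynomial_surjective : Function.Surjective (toQuotientPolynomial s) :=
  (Polynomial.map_surjective _ Ideal.Quotient.mk_surjective).comp
    (finSuccEquivLast k n).surjective

theorem derivative_toQuotientPolynomial (p : MvPolynomial (Fin (n + 1)) k) :
    Polynomial.derivative (toQuotientPolynomial s p) =
      toQuotientPolynomial s (pderiv (Fin.last n) p) := by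
  rw [toQuotientPolynomial_apply, toQuotientPolynomial_apply, Polynomial.derivative_map,
    derivative_finSuccEquivLast]

theorem ker_toQuotientPolynomial :
    RingHom.ker (toQuotientPolynomial s) =
      Ideal.span (Set.range fun i => rename Fin.castSucc (s i)) := by
  have hspan : (Ideal.span (Set.range s)).map Polynomial.C =
      (Ideal.span (Set.range fun i => rename Fin.castSucc (s i))).map
        (finSuccEquivLast k n).toRingEquiv := by
    rw [Ideal.map_span, Ideal.map_span, ← Set.range_comp, ← Set.range_comp]
    congr 2
    funext i
    exact (finSuccEquivLast_rename_castSucc (s i)).symm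
  ext p
  rw [RingHom.mem_ker, toQuotientPolynomial_apply, ← Polynomial.coe_mapRingHom,
    ← RingHom.mem_ker, Polynomial.ker_mapRingHom, Ideal.mk_ker, hspan]
  exact Ideal.apply_mem_of_equiv_iff

variable {s} {p : MvPolynomial (Fin (n + 1)) k}

theorem MonicInVar.monic_toQuotientPolynomial (h : MonicInVar p (Fin.last n)) :
    (toQuotientPolynomial s p).Monic :=
  h.monic_finSuccEquivLast.map _

theorem MonicInVar.natDegree_toQuotientPolynomial_pos [Nontrivial k]
    [Nontrivial (MvPolynomial (Fin n) k ⧸ Ideal.span (Set.range s))]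
    (h : MonicInVar p (Fin.last n)) : 0 < (toQuotientPolynomial s p).natDegree := by
  rw [toQuotientPolynomial_apply, h.monic_finSuccEquivLast.natDegree_map]
  exact h.natDegree_finSuccEquivLast_pos

end LastVariable

def IsSeparableModLower {k : Type*} [CommRing k] {n : ℕ} (t : Fin n → MvPolynomial (Fin n) k)
    (i : Fin n) : Prop :=
  ∃ A B : MvPolynomial (Fin n) k,
    A * t i + B * (pderiv i (t i)) - 1 ∈ Ideal.span {f | ∃ j : Fin n, j < i ∧ f = t j}

section Step

variable {k : Type*} [CommRing k] {n : ℕ} {t : Fin (n + 1) → MvPolynomial (Fin (n + 1)) k}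
  {s : Fin n → MvPolynomial (Fin n) k}

theorem isSeparableModLower_castSucc_iff (hts : ∀ i, t i.castSucc = rename Fin.castSucc (s i))
    (i : Fin n) :
    IsSeparableModLower t i.castSucc ↔ IsSeparableModLower s i := by
  have hspan : Ideal.span {f | ∃ j, j < i.castSucc ∧ f = t j} =
      (Ideal.span {f | ∃ j, j < i ∧ f = s j}).map (rename Fin.castSucc) := by
    rw [Ideal.map_span]
    congr 1
    ext f
    constructor
    · rintro ⟨j, hji, rfl⟩
      obtain ⟨j, rfl⟩ := Fin.exists_castSucc_eq.mpr (Fin.ne_last_of_lt hji)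
      exact ⟨s j, ⟨j, Fin.castSucc_lt_castSucc_iff.mp hji, rfl⟩, (hts j).symm⟩
    · rintro ⟨_, ⟨j, hji, rfl⟩, rfl⟩
      exact ⟨j.castSucc, Fin.castSucc_lt_castSucc_iff.mpr hji, (hts j).symm⟩
  rw [IsSeparableModLower, IsSeparableModLower, hspan, hts,
    pderiv_rename (Fin.castSucc_injective n)]
  exact exists_mul_add_mul_sub_one_mem_map_iff
    (killCompl_rename_app (Fin.castSucc_injective n)) _ _ _

theorem isSeparableModLower_last_iff (hts : ∀ i, t i.castSucc = rename Fin.castSucc (s i)) :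
    IsSeparableModLower t (Fin.last n) ↔
      (toQuotientPolynomial s (t (Fin.last n))).Separable := by
  have hspan : Ideal.span {f | ∃ j, j < Fin.last n ∧ f = t j} =
      RingHom.ker (toQuotientPolynomial s) := by
    rw [ker_toQuotientPolynomial]
    congr 1
    ext f
    constructor
    · rintro ⟨j, hj, rfl⟩
      obtain ⟨j, rfl⟩ := Fin.exists_castSucc_eq.mpr (Fin.ne_last_of_lt hj)
      exact ⟨j, (hts j).symm⟩
    · rintro ⟨j, rfl⟩
      exact ⟨j.castSucc, Fin.castSucc_lt_last j, (hts j).symm⟩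
  rw [IsSeparableModLower, hspan, Polynomial.separable_def, derivative_toQuotientPolynomial,
    isCoprime_apply_iff_of_surjective (toQuotientPolynomial_surjective s)]

theorem span_range_eq_span_last_sup_ker_toQuotientPolynomial
    (hts : ∀ i, t i.castSucc = rename Fin.castSucc (s i)) :
    Ideal.span (Set.range t) =
      Ideal.span {t (Fin.last n)} ⊔ RingHom.ker (toQuotientPolynomial s) := by
  have hinit : Fin.init t = fun i => rename Fin.castSucc (s i) := funext hts
  rw [ker_toQuotientPolynomial, ← Ideal.span_union, ← Set.insert_eq, ← hinit, ← Fin.range_snoc,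
    Fin.snoc_init_self]

noncomputable def quotientSpanRangeEquivAdjoinRoot
    (hts : ∀ i, t i.castSucc = rename Fin.castSucc (s i)) :
    (MvPolynomial (Fin (n + 1)) k ⧸ Ideal.span (Set.range t)) ≃ₐ[k]
      AdjoinRoot (toQuotientPolynomial s (t (Fin.last n))) :=
  (Ideal.quotientEquivAlgOfEq k (span_range_eq_span_last_sup_ker_toQuotientPolynomial hts)).trans
    (AlgHom.quotientSpanSupKerEquivAdjoinRoot (toQuotientPolynomial_surjective s) _)

end Step

theorem IsTriangularSet.finite_and_nontrivial_quotient {k : Type*} [CommRing k] [Nontrivial k] :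
    ∀ {n : ℕ} {t : Fin n → MvPolynomial (Fin n) k}, IsTriangularSet t →
      Module.Finite k (MvPolynomial (Fin n) k ⧸ Ideal.span (Set.range t)) ∧
        Nontrivial (MvPolynomial (Fin n) k ⧸ Ideal.span (Set.range t))
  | 0, t, _ => by
    have := Module.Finite.equiv (isEmptyAlgEquiv k (Fin 0)).symm.toLinearEquiv
    refine ⟨Module.Finite.of_surjective (Ideal.Quotient.mkₐ k _).toLinearMap
      Ideal.Quotient.mk_surjective, Ideal.Quotient.nontrivial_iff.mpr ?_⟩
    rw [Set.range_eq_empty t, Ideal.span_empty]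
    exact bot_ne_top
  | n + 1, t, ht => by
    obtain ⟨s, hs, hts⟩ := ht.exists_rename_castSucc
    obtain ⟨_, _⟩ := hs.finite_and_nontrivial_quotient
    have hmonic := (ht (Fin.last n)).1.monic_toQuotientPolynomial (s := s)
    have := hmonic.finite_adjoinRoot
    have := Module.Finite.trans (R := k) (MvPolynomial (Fin n) k ⧸ Ideal.span (Set.range s))
      (AdjoinRoot (toQuotientPolynomial s (t (Fin.last n))))
    have := (AdjoinRoot.of.injective_of_monic hmonic
      (ht (Fin.last n)).1.natDegree_toQuotientPolynomial_pos).nontrivial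
    let e := quotientSpanRangeEquivAdjoinRoot hts
    exact ⟨Module.Finite.equiv e.symm.toLinearEquiv, e.symm.injective.nontrivial⟩

/-- Over a perfect field, the ideal of a zero-dimensional triangular set `T` is radical iff for
every `i` we have `gcd(t_i, ∂t_i/∂z_i) = 1 (mod ⟨T_{i-1}⟩)`, i.e. `t_i` and its derivative
generate the unit ideal modulo `⟨t_1, …, t_{i-1}⟩`. -/
theorem radical_iff_separable_mod_lower {k : Type*} [Field k] [PerfectField k] {n : ℕ}
    (t : Fin n → MvPolynomial (Fin n) k) (ht : IsTriangularSet t) :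
    (Ideal.span (Set.range t)).IsRadical ↔
      ∀ i : Fin n, ∃ A B : MvPolynomial (Fin n) k,
        A * t i + B * (pderiv i (t i)) - 1 ∈ Ideal.span {f | ∃ j : Fin n, j < i ∧ f = t j} := by
  change _ ↔ ∀ i, IsSeparableModLower t i
  induction n with
  | zero => simpa [Set.range_eq_empty t] using Ideal.isRadical_bot
  | succ n ih =>
    obtain ⟨s, hs, hts⟩ := ht.exists_rename_castSucc
    obtain ⟨_, _⟩ := hs.finite_and_nontrivial_quotient
    have hlast := (ht (Fin.last n)).1
    rw [Ideal.isRadical_iff_quotient_reduced,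
      (quotientSpanRangeEquivAdjoinRoot hts).toRingEquiv.isReduced_iff,
      hlast.monic_toQuotientPolynomial.isReduced_adjoinRoot_iff k
        hlast.natDegree_toQuotientPolynomial_pos,
      ← Ideal.isRadical_iff_quotient_reduced, ih s hs, ← Polynomial.separable_def,
      Fin.forall_fin_succ', isSeparableModLower_last_iff hts]
    simp only [isSeparableModLower_castSucc_iff hts]
end

section
/- Let R be a finite direct product of fields over Q realized as Q[z_1,...,z_n]/⟨T⟩ for a radical zero-dimensional triangular set T, and let a, b ∈ R[x] with componentwise gcd g. Then only finitely many primes p are unlucky, i.e., for all but finitely many primes p, the reduction of g mod p remains a componentwise greatest common divisor of a mod p and b mod p. -/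
open MvPolynomial

/-- Reduction of a rational number modulo `p`. -/
noncomputable def redQ (p : ℕ) (q : ℚ) : ZMod p :=
  (q.num : ZMod p) * (q.den : ZMod p)⁻¹

/-- Coefficientwise reduction of a multivariate rational polynomial modulo `p`. -/
noncomputable def redMv (p : ℕ) {n : ℕ} (f : MvPolynomial (Fin n) ℚ) :
    MvPolynomial (Fin n) (ZMod p) :=
  ∑ m ∈ f.support, monomial m (redQ p (coeff m f))

/-- Coefficientwise reduction modulo `p` of a univariate polynomial over `ℚ[z_1,…,z_n]`. -/
noncomputable def redPolyX (p : ℕ) {n : ℕ} (f : Polynomial (MvPolynomial (Fin n) ℚ)) :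
    Polynomial (MvPolynomial (Fin n) (ZMod p)) :=
  ∑ m ∈ f.support, Polynomial.C (redMv p (f.coeff m)) * Polynomial.X ^ m

/-- `g` divides `a` modulo the ideal `J` of the coefficient ring. -/
def DvdMod {C : Type*} [CommRing C] (J : Ideal C) (g a : Polynomial C) : Prop :=
  ∃ q : Polynomial C, a - g * q ∈ Ideal.map (Polynomial.C : C →+* Polynomial C) J

/-- `g` is a (componentwise) greatest common divisor of `a` and `b` modulo `J`. -/
def IsGcdMod {C : Type*} [CommRing C] (J : Ideal C) (a b g : Polynomial C) : Prop :=
  DvdMod J g a ∧ DvdMod J g b ∧ ∀ d : Polynomial C, DvdMod J d a → DvdMod J d b → DvdMod J d g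

/-!
Since `T` is triangular, each `z_i` is integral over `ℚ[z_1, …, z_{i-1}]` modulo `T`, so
`R = ℚ[z]/⟨T⟩` is finite over `ℚ`; being also reduced, it is a finite
product of fields, so `R[x]` is a principal ideal ring. There the gcd condition forces the ideal
equality `(g) = (a, b)`, i.e. the Bézout identity `g ≡ a u + b v`, alongside `a ≡ g q_a`,
`b ≡ g q_b` modulo `T`. These are finitely many polynomial identities over `ℚ`, and they survive
reduction modulo every prime not dividing one of their finitely many denominators. Modulo such
a prime, the reduced identities again show that `g` is a gcd, since any common divisor of `a` and
`b` divides `a u + b v`.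
-/

theorem isIntegral_of_aeval_eq_zero_of_monicInVar {R S : Type*} [CommRing R] [CommRing S]
    [Algebra R S] {n : ℕ} {f : MvPolynomial (Fin n) R} {i : Fin n} (hf : MonicInVar f i)
    {x : Fin n → S} (hx : ∀ k ∈ f.vars, k ≠ i → IsIntegral R (x k)) (hroot : aeval x f = 0) :
    IsIntegral R (x i) := by
  classical
  let c : {k // k ≠ i} → integralClosure R S := fun k =>
    if h : k.1 ∈ f.vars then ⟨x k, hx k h k.2⟩ else 0
  -- `Ψ g` is `g` as a polynomial in `X i`, the other variables specialised to the `x k`.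
  let Ψ : MvPolynomial (Fin n) R →ₐ[R] Polynomial (integralClosure R S) :=
    (Polynomial.mapAlgHom (aeval c)).comp
      ((optionEquivLeft R {k // k ≠ i}).toAlgHom.comp (rename (Equiv.optionSubtypeNe i).symm))
  have hΨ_X : Ψ (X i) = Polynomial.X := by
    simp [Ψ, Equiv.optionSubtypeNe_symm_apply, optionEquivLeft_X_none]
  have hΨ_X_ne (k : Fin n) (hk : k ≠ i) : Ψ (X k) = Polynomial.C (c ⟨k, hk⟩) := by
    simp [Ψ, Equiv.optionSubtypeNe_symm_apply, hk, optionEquivLeft_X_some]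
  have hΨ_natDegree (g : MvPolynomial (Fin n) R) : (Ψ g).natDegree ≤ degreeOf i g :=
    Polynomial.natDegree_map_le.trans (degreeOf_eq_natDegree i g).ge
  have hΨ_aeval : Polynomial.aeval (x i) (Ψ f) = aeval x f := by
    refine hom_congr_vars
      (f₁ := ((Polynomial.aeval (x i)).restrictScalars R).toRingHom.comp Ψ.toRingHom)
      (f₂ := (aeval x).toRingHom) ?_ (fun k hk _ => ?_) rfl
    · ext; simp
    · by_cases hki : k = i
      · subst hki; simp [hΨ_X]
      · simp [hΨ_X_ne k hki, c, hk]
  obtain ⟨d, r, hd, hr, rfl⟩ := hf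
  have hmonic : (Ψ (X i ^ d + r)).Monic := by
    rw [map_add, map_pow, hΨ_X]
    exact Polynomial.monic_X_pow_add
      (Polynomial.degree_le_natDegree.trans_lt (by exact_mod_cast (hΨ_natDegree r).trans_lt hr))
  exact isIntegral_trans _ ⟨_, hmonic, by rw [← Polynomial.aeval_def, hΨ_aeval, hroot]⟩

theorem IsTriangularSet.moduleFinite_quotient {R : Type*} [CommRing R] {n : ℕ}
    {t : Fin n → MvPolynomial (Fin n) R} (ht : IsTriangularSet t) :
    Module.Finite R (MvPolynomial (Fin n) R ⧸ Ideal.span (Set.range t)) := by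
  set π := Ideal.Quotient.mkₐ R (Ideal.span (Set.range t))
  have hint (i : Fin n) : IsIntegral R (π (X i)) := by
    induction i using WellFoundedLT.induction with | _ i IH
    refine isIntegral_of_aeval_eq_zero_of_monicInVar (ht i).1 (x := fun k => π (X k))
      (fun k hk hki => IH k ?_) ?_
    · by_contra hik
      exact mem_vars_iff_degreeOf_ne_zero.1 hk
        ((ht i).2.1 k (lt_of_le_of_ne (not_lt.1 hik) hki.symm))
    · rw [show aeval (fun k => π (X k)) = π from (aeval_unique π).symm, Ideal.Quotient.mkₐ_eq_mk,
        Ideal.Quotient.eq_zero_iff_mem]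
      exact Ideal.subset_span ⟨i, rfl⟩
  have hadj : Algebra.adjoin R (Set.range fun k => π (X k)) = ⊤ := by
    rw [show (Set.range fun k => π (X k)) = π '' Set.range X from Set.range_comp _ _,
      Algebra.adjoin_image, adjoin_range_X, Algebra.map_top, AlgHom.range_eq_top]
    exact Ideal.Quotient.mkₐ_surjective R _
  have := Algebra.finite_adjoin_of_finite_of_isIntegral (Set.finite_range _)
    (Set.forall_mem_range.2 hint)
  rw [hadj] at this
  exact Module.Finite.equiv Subalgebra.topEquiv.toLinearEquiv

theorem IsArtinianRing.isPrincipalIdealRing_polynomial (Q : Type*) [CommRing Q] [IsArtinianRing Q]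
    [IsReduced Q] : IsPrincipalIdealRing (Polynomial Q) := by
  have (I : MaximalSpectrum Q) : IsPrincipalIdealRing (Polynomial (Q ⧸ I.asIdeal)) := by
    let := Ideal.Quotient.field I.asIdeal
    infer_instance
  exact IsPrincipalIdealRing.of_surjective
    ((Polynomial.mapEquiv (IsArtinianRing.equivPi Q).toRingEquiv).trans
      (Polynomial.piEquiv _)).symm.toRingHom (RingEquiv.surjective _)

section GcdModulo

variable {C : Type*} [CommRing C] {J : Ideal C}

lemma dvdMod_iff_mem_span_sup {g a : Polynomial C} :
    DvdMod J g a ↔ a ∈ Ideal.span {g} ⊔ J.map Polynomial.C := by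
  simp only [DvdMod, Submodule.mem_sup, Ideal.mem_span_singleton']
  constructor
  · rintro ⟨q, hq⟩
    exact ⟨q * g, ⟨q, rfl⟩, _, hq, by ring⟩
  · rintro ⟨_, ⟨q, rfl⟩, z, hz, rfl⟩
    exact ⟨q, by rwa [mul_comm, add_sub_cancel_left]⟩

lemma isGcdMod_of_mem_span_sup {a b g : Polynomial C}
    (ha : a ∈ Ideal.span {g} ⊔ J.map Polynomial.C) (hb : b ∈ Ideal.span {g} ⊔ J.map Polynomial.C)
    (hg : g ∈ Ideal.span {a, b} ⊔ J.map Polynomial.C) : IsGcdMod J a b g := by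
  simp only [IsGcdMod, dvdMod_iff_mem_span_sup]
  refine ⟨ha, hb, fun d hda hdb => ?_⟩
  have hab : Ideal.span {a, b} ≤ Ideal.span {d} ⊔ J.map Polynomial.C :=
    Ideal.span_le.2 (Set.insert_subset hda (Set.singleton_subset_iff.2 hdb))
  exact sup_le hab le_sup_right hg

lemma mem_span_pair_of_forall_dvd {A : Type*} [CommRing A] [IsPrincipalIdealRing A] {a b g : A}
    (h : ∀ d, d ∣ a → d ∣ b → d ∣ g) : g ∈ Ideal.span {a, b} := by
  obtain ⟨d, hd⟩ := (IsPrincipalIdealRing.principal (Ideal.span {a, b})).principal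
  have hd' : Ideal.span {a, b} = Ideal.span {d} := hd
  rw [hd', Ideal.mem_span_singleton]
  refine h d ?_ ?_ <;> rw [← Ideal.mem_span_singleton, ← hd']
  · exact Ideal.subset_span (Set.mem_insert _ _)
  · exact Ideal.subset_span (Set.mem_insert_of_mem _ rfl)

lemma mem_span_sup_of_isGcdMod [IsPrincipalIdealRing (Polynomial (C ⧸ J))] {a b g : Polynomial C}
    (h : IsGcdMod J a b g) : g ∈ Ideal.span {a, b} ⊔ J.map Polynomial.C := by
  set φ := Polynomial.mapRingHom (Ideal.Quotient.mk J)
  have hφ : Function.Surjective φ := Polynomial.map_surjective _ Ideal.Quotient.mk_surjective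
  have hmem : ∀ (s : Set (Polynomial C)) x,
      x ∈ Ideal.span s ⊔ J.map Polynomial.C ↔ φ x ∈ Ideal.span (φ '' s) := by
    intro s x
    rw [← Ideal.map_span, ← Ideal.mem_comap, Ideal.comap_map_of_surjective' φ hφ,
      Polynomial.ker_mapRingHom, Ideal.mk_ker]
  rw [hmem, Set.image_pair]
  refine mem_span_pair_of_forall_dvd fun d hda hdb => ?_
  obtain ⟨d, rfl⟩ := hφ d
  simp only [← Ideal.mem_span_singleton, ← Set.image_singleton, ← hmem,
    ← dvdMod_iff_mem_span_sup] at hda hdb ⊢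
  exact h.2.2 d hda hdb

end GcdModulo

def denCoprimeSubring (p : ℕ) : Subring ℚ where
  carrier := {q | q.den.Coprime p}
  mul_mem' {x y} hx hy := Nat.Coprime.coprime_dvd_left (Rat.mul_den_dvd x y) (hx.mul_left hy)
  one_mem' := Nat.coprime_one_left p
  add_mem' {x y} hx hy := Nat.Coprime.coprime_dvd_left (Rat.add_den_dvd x y) (hx.mul_left hy)
  zero_mem' := Nat.coprime_one_left p
  neg_mem' {x} hx := by simpa using hx

section Reduction

variable {p : ℕ}

lemma redQ_mul_den {q : ℚ} (hq : q.den.Coprime p) : redQ p q * q.den = q.num := by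
  rw [redQ, mul_assoc, mul_comm _ (q.den : ZMod p), ZMod.coe_mul_inv_eq_one _ hq, mul_one]

lemma redQ_mul_natCast {q : ℚ} {d : ℕ} {m : ℤ} (hq : q.den.Coprime p) (h : q * d = m) :
    redQ p q * d = m := by
  have hZ : q.num * (d : ℤ) = m * q.den := by
    exact_mod_cast (by rw [← Rat.mul_den_eq_num q, ← h]; ring : (q.num : ℚ) * d = m * q.den)
  have hZp := congrArg (Int.cast : ℤ → ZMod p) hZ
  push_cast at hZp
  refine ((ZMod.isUnit_iff_coprime _ _).2 hq).mul_left_inj.1 ?_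
  linear_combination (d : ZMod p) * redQ_mul_den hq + hZp

variable (p) in
noncomputable def ratReduction : denCoprimeSubring p →+* ZMod p where
  toFun q := redQ p q
  map_one' := by simp [redQ]
  map_zero' := by simp [redQ]
  map_mul' := by
    rintro ⟨x, hx⟩ ⟨y, hy⟩
    show redQ p (x * y) = redQ p x * redQ p y
    have hxy := redQ_mul_natCast (d := x.den * y.den) (m := x.num * y.num) (mul_mem hx hy) (by
      push_cast; rw [← Rat.mul_den_eq_num x, ← Rat.mul_den_eq_num y]; ring)
    refine ((ZMod.isUnit_iff_coprime _ _).2 (Nat.Coprime.mul_left hx hy)).mul_left_inj.1 ?_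
    push_cast at hxy ⊢
    linear_combination
      hxy - (redQ p y * y.den) * redQ_mul_den hx - (x.num : ZMod p) * redQ_mul_den hy
  map_add' := by
    rintro ⟨x, hx⟩ ⟨y, hy⟩
    show redQ p (x + y) = redQ p x + redQ p y
    have hxy := redQ_mul_natCast (d := x.den * y.den) (m := x.num * y.den + y.num * x.den)
      (add_mem hx hy) (by
      push_cast; rw [← Rat.mul_den_eq_num x, ← Rat.mul_den_eq_num y]; ring)
    refine ((ZMod.isUnit_iff_coprime _ _).2 (Nat.Coprime.mul_left hx hy)).mul_left_inj.1 ?_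
    push_cast at hxy ⊢
    linear_combination hxy - (y.den : ZMod p) * redQ_mul_den hx - (x.den : ZMod p) * redQ_mul_den hy

lemma coeff_redMv {n : ℕ} (f : MvPolynomial (Fin n) ℚ) (m : Fin n →₀ ℕ) :
    coeff m (redMv p f) = redQ p (coeff m f) := by
  classical
  simp only [redMv, coeff_sum, coeff_monomial, Finset.sum_ite_eq', mem_support_iff]
  split_ifs with h
  · rfl
  · simp [not_not.1 h, redQ]

lemma coeff_redPolyX {n : ℕ} (f : Polynomial (MvPolynomial (Fin n) ℚ)) (k : ℕ) :
    (redPolyX p f).coeff k = redMv p (f.coeff k) := by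
  classical
  simp only [redPolyX, Polynomial.finsetSum_coeff, Polynomial.coeff_C_mul_X_pow,
    Finset.sum_ite_eq, Polynomial.mem_support_iff]
  split_ifs with h
  · rfl
  · ext m; simp [not_not.1 h, coeff_redMv, redQ]

lemma redPolyX_C {n : ℕ} (f : MvPolynomial (Fin n) ℚ) :
    redPolyX p (Polynomial.C f) = Polynomial.C (redMv p f) := by
  ext1 k
  rw [coeff_redPolyX, Polynomial.coeff_C, Polynomial.coeff_C]
  split_ifs
  · rfl
  · ext m; simp [coeff_redMv, redQ]

lemma redPolyX_map {n : ℕ} (F : Polynomial (MvPolynomial (Fin n) (denCoprimeSubring p))) :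
    redPolyX p (F.map (MvPolynomial.map (denCoprimeSubring p).subtype)) =
      F.map (MvPolynomial.map (ratReduction p)) := by
  ext k m
  simp only [coeff_redPolyX, coeff_redMv, Polynomial.coeff_map, coeff_map]
  rfl

end Reduction

lemma eventually_mem_denCoprimeSubring (q : ℚ) :
    ∀ᶠ p in Filter.cofinite, p.Prime → q ∈ denCoprimeSubring p := by
  refine Filter.eventually_cofinite.2 ((Nat.divisors q.den).finite_toSet.subset fun p hp => ?_)
  obtain ⟨hprime, hq⟩ := Classical.not_imp.1 hp
  exact Nat.mem_divisors.2 ⟨hprime.dvd_iff_not_coprime.2 fun h => hq h.symm, q.den_nz⟩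

lemma eventually_mem_lifts {n : ℕ} (f : Polynomial (MvPolynomial (Fin n) ℚ)) :
    ∀ᶠ p in Filter.cofinite, p.Prime →
      f ∈ Polynomial.lifts (MvPolynomial.map (denCoprimeSubring p).subtype) := by
  have hcoeffs := (Filter.eventually_all_finset f.support).2 fun k _ =>
    (Filter.eventually_all_finset (f.coeff k).coeffs).2 fun c _ =>
      eventually_mem_denCoprimeSubring c
  filter_upwards [hcoeffs] with p hp hprime
  refine (Polynomial.lifts_iff_coeff_lifts f).2 fun k => ?_
  by_cases hk : k ∈ f.support
  · rw [MvPolynomial.mem_range_map_iff_coeffs_subset]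
    intro c hc
    exact ⟨⟨c, hp k hk c hc hprime⟩, rfl⟩
  · exact ⟨0, by simpa [eq_comm] using hk⟩

lemma eventually_redPolyX_mem_span {n : ℕ} {s : Set (Polynomial (MvPolynomial (Fin n) ℚ))}
    {f : Polynomial (MvPolynomial (Fin n) ℚ)} (hf : f ∈ Ideal.span s) :
    ∀ᶠ p in Filter.cofinite, p.Prime → redPolyX p f ∈ Ideal.span (redPolyX p '' s) := by
  obtain ⟨k, c, v, rfl⟩ := Submodule.mem_span_set'.1 hf
  have hlift := Filter.eventually_all.2 fun i =>
    (eventually_mem_lifts (c i)).and (eventually_mem_lifts (v i).1)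
  filter_upwards [hlift] with p hp hprime
  choose C hC using fun i => (Polynomial.mem_lifts _).1 ((hp i).1 hprime)
  choose V hV using fun i => (Polynomial.mem_lifts _).1 ((hp i).2 hprime)
  have hsum : ∑ i, c i • (v i : Polynomial (MvPolynomial (Fin n) ℚ)) =
      (∑ i, C i * V i).map (MvPolynomial.map (denCoprimeSubring p).subtype) := by
    simp only [Polynomial.map_sum, Polynomial.map_mul, hC, hV, smul_eq_mul]
  rw [hsum, redPolyX_map, Polynomial.map_sum]
  refine Ideal.sum_mem _ fun i _ => ?_
  rw [Polynomial.map_mul, ← redPolyX_map (V i), hV]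
  exact Ideal.mul_mem_left _ _ (Ideal.subset_span ⟨v i, (v i).2, rfl⟩)

lemma eventually_redPolyX_mem_span_sup {n : ℕ} {t : Fin n → MvPolynomial (Fin n) ℚ}
    {s : Set (Polynomial (MvPolynomial (Fin n) ℚ))} {f : Polynomial (MvPolynomial (Fin n) ℚ)}
    (hf : f ∈ Ideal.span s ⊔ (Ideal.span (Set.range t)).map Polynomial.C) :
    ∀ᶠ p in Filter.cofinite, p.Prime → redPolyX p f ∈
      Ideal.span (redPolyX p '' s) ⊔
        (Ideal.span (Set.range fun i => redMv p (t i))).map Polynomial.C := by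
  rw [Ideal.map_span, ← Ideal.span_union] at hf
  filter_upwards [eventually_redPolyX_mem_span hf] with p hp hprime
  rw [Ideal.map_span, ← Ideal.span_union]
  simpa [Set.image_union, Set.image_image, redPolyX_C, ← Set.range_comp, Function.comp_def]
    using hp hprime

/-- For a radical zero-dimensional triangular set `T` over `ℚ` and a componentwise gcd `g` of
`a, b`, only finitely many primes are unlucky: for all but finitely many primes `p`, the
reduction of `g` mod `p` remains a componentwise gcd of `a mod p` and `b mod p`. -/
theorem finitely_many_unlucky_primes {n : ℕ} (t : Fin n → MvPolynomial (Fin n) ℚ)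
    (ht : IsTriangularSet t) (hrad : (Ideal.span (Set.range t)).IsRadical)
    (a b g : Polynomial (MvPolynomial (Fin n) ℚ))
    (hg : IsGcdMod (Ideal.span (Set.range t)) a b g) :
    {p : ℕ | p.Prime ∧
      ¬ IsGcdMod (Ideal.span (Set.range fun i => redMv p (t i)))
          (redPolyX p a) (redPolyX p b) (redPolyX p g)}.Finite := by
  set J := Ideal.span (Set.range t)
  have : Module.Finite ℚ (MvPolynomial (Fin n) ℚ ⧸ J) := ht.moduleFinite_quotient
  have : IsArtinianRing (MvPolynomial (Fin n) ℚ ⧸ J) := IsArtinianRing.of_finite ℚ _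
  have : IsReduced (MvPolynomial (Fin n) ℚ ⧸ J) := (Ideal.isRadical_iff_quotient_reduced J).1 hrad
  have := IsArtinianRing.isPrincipalIdealRing_polynomial (MvPolynomial (Fin n) ℚ ⧸ J)
  have hlucky : ∀ᶠ p in Filter.cofinite, p.Prime →
      IsGcdMod (Ideal.span (Set.range fun i => redMv p (t i)))
        (redPolyX p a) (redPolyX p b) (redPolyX p g) := by
    filter_upwards [eventually_redPolyX_mem_span_sup (dvdMod_iff_mem_span_sup.1 hg.1),
      eventually_redPolyX_mem_span_sup (dvdMod_iff_mem_span_sup.1 hg.2.1),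
      eventually_redPolyX_mem_span_sup (mem_span_sup_of_isGcdMod hg)] with p ha hb hbezout hp
    rw [Set.image_singleton] at ha hb
    rw [Set.image_pair] at hbezout
    exact isGcdMod_of_mem_span_sup (ha hp) (hb hp) (hbezout hp)
  exact (Filter.eventually_cofinite.1 hlucky).subset fun p hp => Classical.not_imp.2 hp
end

section
/- Let T ⊂ k[z_1,...,z_n] be a zero-dimensional triangular set with main degrees d_i = mdeg(t_i), and let δ_k = d_1⋯d_k, δ = δ_n. Define M(n) to be the number of field multiplications needed to multiply two reduced elements of k[z_1,...,z_n]/⟨T⟩ using the described division strategy, satisfying the recurrence M(n) = δ_n² + D(n), where D(n) = (2d_n − 1)D(n−1) + d_n(d_n − 1)δ_{n−1}² and D(0) = 0. Then D(n) ≤ 2δ_n², and hence M(n) ≤ 3δ². -/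
/-- Complexity recurrence bound: with `δ_k = d_1 ⋯ d_k` and
`D(n+1) = (2d_{n+1} − 1)D(n) + d_{n+1}(d_{n+1} − 1)δ_n²`, `D(0) = 0`, one has
`D(n) ≤ 2δ_n²`, hence `M(n) = δ_n² + D(n) ≤ 3δ_n²`. -/
theorem reduction_cost_bound (d : ℕ → ℕ) (hd : ∀ i, 1 ≤ d i)
    (δ : ℕ → ℕ) (hδ0 : δ 0 = 1) (hδ : ∀ m, δ (m + 1) = δ m * d (m + 1))
    (D : ℕ → ℕ) (hD0 : D 0 = 0)
    (hD : ∀ m, D (m + 1) =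
      (2 * d (m + 1) - 1) * D m + d (m + 1) * (d (m + 1) - 1) * (δ m) ^ 2) :
    ∀ m, D m ≤ 2 * (δ m) ^ 2 ∧ (δ m) ^ 2 + D m ≤ 3 * (δ m) ^ 2 := by
  have key : ∀ m, D m ≤ 2 * (δ m) ^ 2 := by
    intro m
    induction m with
    | zero => simp [hD0]
    | succ n ih =>
      rw [hD n, hδ n]
      have h1 : 1 ≤ d (n + 1) := hd (n + 1)
      obtain ⟨e, he⟩ := Nat.exists_eq_add_of_le h1
      rw [he]
      have : (2 * (1 + e) - 1) = 2 * e + 1 := by omega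
      rw [this]
      have : (1 + e - 1) = e := by omega
      rw [this]
      have h2 : e ≤ e * e := by cases e with | zero => simp | succ k => nlinarith
      nlinarith [ih, Nat.mul_le_mul_left (2*e+1) ih, Nat.mul_le_mul_right (δ n ^ 2) h2]
  intro m
  exact ⟨key m, by have := key m; omega⟩
end
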